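/- arXiv:2601.05892 — 7 statements merged into one kernel-verified Lean document; each statement's English description precedes it below -/
import Mathlib

section
/- Let G be a graph and let A, B, C ⊆ V(G) be pairwise disjoint vertex subsets. Then (1) κ^rk_G(A,B) ≤ κ^rk_G(A, B∪C), and (2) κ^rk_G(A, B∪C) ≤ κ^rk_{G−C}(A,B) + κ^rk_{G−B}(A,C), where G−S denotes the induced subgraph of G on V(G)∖S. -/
/-! If `X₁` attains `κ_{G−C}(A, B)` and `X₂` attains `κ_{G−B}(A, C)`, then `X₁ ∩ X₂` separates
`A` from `B ∪ C`, and every vertex outside `X₁ ∩ X₂` avoids `C` and `X₁` or avoids `B` and `X₂`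
(because `X₁` misses `B`, `X₂` misses `C`, and `B`, `C` are disjoint). Hence every column of the
biadjacency matrix of `(X₁ ∩ X₂, V ∖ (X₁ ∩ X₂))` is a column of a row-restriction of one of the
two optimal matrices, and rank is subadditive over such a union of columns. -/

noncomputable def biadjRank {V : Type} (G : SimpleGraph V) (A B : Finset V) : ℕ :=
  letI : DecidableRel G.Adj := Classical.decRel _
  (Matrix.of fun (a : A) (b : B) => if G.Adj (a : V) (b : V) then (1 : ZMod 2) else 0).rank

/-- The rank-connectivity `κ^rk` of `A` and `B`, computed in the subgraph of `G` induced
on the vertex set `U`: the minimum of `rk(X, U \ X)` over all `X` with `A ⊆ X ⊆ U ∖ B`. -/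
noncomputable def rankConnOn {V : Type} [DecidableEq V]
    (G : SimpleGraph V) (U A B : Finset V) : ℕ :=
  sInf {r : ℕ | ∃ X : Finset V, X ⊆ U ∧ A ⊆ X ∧ Disjoint X B ∧ r = biadjRank G X (U \ X)}

theorem Matrix.rank_le_add_of_range_col_subset {K m n n₁ n₂ : Type*} [Field K] [Fintype m]
    [Fintype n] [Fintype n₁] [Fintype n₂]
    {M : Matrix m n K} {M₁ : Matrix m n₁ K} {M₂ : Matrix m n₂ K}
    (h : Set.range M.col ⊆ Set.range M₁.col ∪ Set.range M₂.col) :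
    M.rank ≤ M₁.rank + M₂.rank := by
  simp only [Matrix.rank_eq_finrank_span_cols]
  calc Module.finrank K (Submodule.span K (Set.range M.col))
      ≤ Module.finrank K ↥(Submodule.span K (Set.range M₁.col) ⊔
          Submodule.span K (Set.range M₂.col)) := by
        rw [← Submodule.span_union]
        exact Submodule.finrank_mono (Submodule.span_mono h)
    _ ≤ _ := Submodule.finrank_add_le_finrank_add_finrank _ _

namespace SimpleGraph

variable {V : Type} (G : SimpleGraph V)

noncomputable def biadjMatrix (A B : Finset V) : Matrix A B (ZMod 2) :=
  letI : DecidableRel G.Adj := Classical.decRel _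
  Matrix.of fun a b => if G.Adj a b then 1 else 0

theorem biadjRank_eq_rank_biadjMatrix (A B : Finset V) :
    biadjRank G A B = (G.biadjMatrix A B).rank := rfl

theorem biadjRank_mono {X X' Y Y' : Finset V} (hX : X ⊆ X') (hY : Y ⊆ Y') :
    biadjRank G X Y ≤ biadjRank G X' Y' := by
  simp only [biadjRank_eq_rank_biadjMatrix]
  exact (G.biadjMatrix X' Y').rank_submatrix_le (fun a : X => ⟨a, hX a.2⟩)
    (fun b : Y => ⟨b, hY b.2⟩)

theorem biadjRank_union_le [DecidableEq V] (X Y₁ Y₂ : Finset V) :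
    biadjRank G X (Y₁ ∪ Y₂) ≤ biadjRank G X Y₁ + biadjRank G X Y₂ := by
  simp only [biadjRank_eq_rank_biadjMatrix]
  refine Matrix.rank_le_add_of_range_col_subset ?_
  rintro _ ⟨⟨y, hy⟩, rfl⟩
  rcases Finset.mem_union.mp hy with hy₁ | hy₂
  · exact Or.inl ⟨⟨y, hy₁⟩, rfl⟩
  · exact Or.inr ⟨⟨y, hy₂⟩, rfl⟩

theorem biadjRank_inter_le [DecidableEq V] {U B C X₁ X₂ : Finset V} (hBC : Disjoint B C)
    (hX₁B : Disjoint X₁ B) (hX₂C : Disjoint X₂ C) :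
    biadjRank G (X₁ ∩ X₂) (U \ (X₁ ∩ X₂)) ≤
      biadjRank G X₁ ((U \ C) \ X₁) + biadjRank G X₂ ((U \ B) \ X₂) := by
  have hcover : U \ (X₁ ∩ X₂) ⊆ (U \ C) \ X₁ ∪ (U \ B) \ X₂ := by
    intro v hv
    have hvBC : v ∈ B → v ∉ C := fun h => Finset.disjoint_left.mp hBC h
    have hvX₁B : v ∈ X₁ → v ∉ B := fun h => Finset.disjoint_left.mp hX₁B h
    have hvX₂C : v ∈ X₂ → v ∉ C := fun h => Finset.disjoint_left.mp hX₂C h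
    simp only [Finset.mem_sdiff, Finset.mem_inter, Finset.mem_union] at hv ⊢
    tauto
  calc biadjRank G (X₁ ∩ X₂) (U \ (X₁ ∩ X₂))
      ≤ biadjRank G (X₁ ∩ X₂) ((U \ C) \ X₁ ∪ (U \ B) \ X₂) :=
        G.biadjRank_mono subset_rfl hcover
    _ ≤ biadjRank G (X₁ ∩ X₂) ((U \ C) \ X₁) + biadjRank G (X₁ ∩ X₂) ((U \ B) \ X₂) :=
        G.biadjRank_union_le _ _ _
    _ ≤ _ := add_le_add (G.biadjRank_mono Finset.inter_subset_left subset_rfl)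
        (G.biadjRank_mono Finset.inter_subset_right subset_rfl)

variable [DecidableEq V] {U A B C : Finset V}

theorem rankConnOn_le {X : Finset V} (hXU : X ⊆ U) (hAX : A ⊆ X) (hXB : Disjoint X B) :
    rankConnOn G U A B ≤ biadjRank G X (U \ X) :=
  Nat.sInf_le ⟨X, hXU, hAX, hXB, rfl⟩

theorem exists_rankConnOn_eq (hAU : A ⊆ U) (hAB : Disjoint A B) :
    ∃ X ⊆ U, A ⊆ X ∧ Disjoint X B ∧ rankConnOn G U A B = biadjRank G X (U \ X) := by
  let S := {r : ℕ | ∃ X : Finset V, X ⊆ U ∧ A ⊆ X ∧ Disjoint X B ∧ r = biadjRank G X (U \ X)}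
  exact Nat.sInf_mem (s := S) ⟨_, A, hAU, subset_rfl, hAB, rfl⟩

theorem rankConnOn_mono_right {B' : Finset V} (hAU : A ⊆ U) (hAB' : Disjoint A B')
    (hB : B ⊆ B') : rankConnOn G U A B ≤ rankConnOn G U A B' := by
  obtain ⟨X, hXU, hAX, hXB', hX⟩ := G.exists_rankConnOn_eq hAU hAB'
  exact hX ▸ G.rankConnOn_le hXU hAX (hXB'.mono_right hB)

theorem rankConnOn_union_le (hAU : A ⊆ U) (hAB : Disjoint A B) (hAC : Disjoint A C)
    (hBC : Disjoint B C) :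
    rankConnOn G U A (B ∪ C) ≤ rankConnOn G (U \ C) A B + rankConnOn G (U \ B) A C := by
  obtain ⟨X₁, hX₁U, hAX₁, hX₁B, h₁⟩ :=
    G.exists_rankConnOn_eq (Finset.subset_sdiff.mpr ⟨hAU, hAC⟩) hAB
  obtain ⟨X₂, hX₂U, hAX₂, hX₂C, h₂⟩ :=
    G.exists_rankConnOn_eq (Finset.subset_sdiff.mpr ⟨hAU, hAB⟩) hAC
  have hXBC : Disjoint (X₁ ∩ X₂) (B ∪ C) := Finset.disjoint_union_right.mpr
    ⟨hX₁B.mono_left Finset.inter_subset_left, hX₂C.mono_left Finset.inter_subset_right⟩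
  rw [h₁, h₂]
  calc rankConnOn G U A (B ∪ C) ≤ biadjRank G (X₁ ∩ X₂) (U \ (X₁ ∩ X₂)) :=
        G.rankConnOn_le (Finset.inter_subset_left.trans (hX₁U.trans Finset.sdiff_subset))
          (Finset.subset_inter hAX₁ hAX₂) hXBC
    _ ≤ _ := G.biadjRank_inter_le hBC hX₁B hX₂C

end SimpleGraph

/-- Monotonicity and subadditivity of the rank-connectivity function:
for pairwise disjoint vertex sets `A`, `B`, `C` of a graph `G`,
(1) `κ^rk_G(A,B) ≤ κ^rk_G(A, B ∪ C)`, and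
(2) `κ^rk_G(A, B ∪ C) ≤ κ^rk_{G−C}(A,B) + κ^rk_{G−B}(A,C)`. -/
theorem rankConn_mono_and_subadditive {V : Type} [Fintype V] [DecidableEq V]
    (G : SimpleGraph V) (A B C : Finset V)
    (hAB : Disjoint A B) (hAC : Disjoint A C) (hBC : Disjoint B C) :
    rankConnOn G Finset.univ A B ≤ rankConnOn G Finset.univ A (B ∪ C) ∧
    rankConnOn G Finset.univ A (B ∪ C) ≤
      rankConnOn G (Finset.univ \ C) A B + rankConnOn G (Finset.univ \ B) A C := by
  refine ⟨G.rankConnOn_mono_right (Finset.subset_univ A)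
    (Finset.disjoint_union_right.mpr ⟨hAB, hAC⟩) Finset.subset_union_left, ?_⟩
  exact G.rankConnOn_union_le (Finset.subset_univ A) hAB hAC hBC
end

section
/- For every graph G, every 1-partition sequence (P_i)_{i∈[n]} of G, every i ∈ [n], and every two distinct parts P, Q ∈ P_i, the bipartite graph G[P,Q] with sides P and Q is a partial half-graph. -/
section PartitionSequences

variable {V : Type} [Fintype V] [DecidableEq V]

/-- Two vertex sets are fully connected if every cross pair is an edge. -/
def FullyConn (G : SimpleGraph V) (P Q : Finset V) : Prop :=
  ∀ u ∈ P, ∀ v ∈ Q, G.Adj u v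

/-- Two vertex sets are disconnected if no cross pair is an edge. -/
def NoConn (G : SimpleGraph V) (P Q : Finset V) : Prop :=
  ∀ u ∈ P, ∀ v ∈ Q, ¬ G.Adj u v

/-- Two (distinct) parts are joined by a red edge in the quotient trigraph iff they are
neither fully connected nor disconnected. -/
def RedEdge (G : SimpleGraph V) (P Q : Finset V) : Prop :=
  P ≠ Q ∧ ¬ FullyConn G P Q ∧ ¬ NoConn G P Q

/-- The red degree of the part `P` in the quotient trigraph `G/Ps`. -/
noncomputable def redDegree (G : SimpleGraph V) (Ps : Finset (Finset V)) (P : Finset V) : ℕ :=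
  Set.ncard {Q : Finset V | Q ∈ Ps ∧ RedEdge G P Q}

/-- `P` is obtained from `P'` by merging two distinct parts `A`, `B` into `A ∪ B`. -/
def IsMergeOf (P' P : Finset (Finset V)) : Prop :=
  ∃ A ∈ P', ∃ B ∈ P', A ≠ B ∧ P = (P' \ {A, B}) ∪ {A ∪ B}

/-- `Pseq n, Pseq (n-1), …, Pseq 1` (with `n = |V|`) is a partition sequence: `Pseq n` is the partition
into singletons and each `Pseq i` is obtained from `Pseq (i+1)` by merging two parts. -/
def IsPartitionSeq (Pseq : ℕ → Finpartition (Finset.univ : Finset V)) : Prop :=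
  (Pseq (Fintype.card V)).parts = Finset.univ.image (fun v => ({v} : Finset V)) ∧
  ∀ i, 1 ≤ i → i < Fintype.card V → IsMergeOf (Pseq (i + 1)).parts (Pseq i).parts

/-- The partition sequence `Pseq` has width at most `k`: every vertex of every quotient
trigraph `G/Pseq i` has red degree at most `k`. -/
def SeqWidthLE (G : SimpleGraph V) (Pseq : ℕ → Finpartition (Finset.univ : Finset V))
    (k : ℕ) : Prop :=
  ∀ i, 1 ≤ i → i ≤ Fintype.card V → ∀ P ∈ (Pseq i).parts, redDegree G (Pseq i).parts P ≤ k

end PartitionSequences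

/-- The bipartite graph `G[L,R]` (with sides `L` and `R`, cross edges induced by `G`)
is a partial half-graph: it embeds into some half-graph `H_n`, with `L` going to the
left side and `R` to the right side, preserving edges and non-edges between the sides. -/
def IsPartialHalfGraph {V : Type} (G : SimpleGraph V) (L R : Finset V) : Prop :=
  ∃ (n : ℕ) (f g : V → Fin n),
    Set.InjOn f (L : Set V) ∧ Set.InjOn g (R : Set V) ∧
    ∀ u ∈ L, ∀ v ∈ R, (G.Adj u v ↔ (f u : ℕ) ≤ (g v : ℕ))


section AuxHalfGraph
variable {V : Type} [Fintype V] [DecidableEq V]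
set_option linter.unusedSectionVars false

def NoCross (G : SimpleGraph V) (L R : Finset V) : Prop :=
  ∀ u ∈ L, ∀ u' ∈ L, ∀ v ∈ R, ∀ v' ∈ R,
    G.Adj u v → G.Adj u' v' → ¬ G.Adj u v' → ¬ G.Adj u' v → False

lemma noCross_symm {G : SimpleGraph V} {L R : Finset V} (h : NoCross G L R) :
    NoCross G R L := by
  intro v hv v' hv' u hu u' hu' h1 h2 h3 h4
  exact h u hu u' hu' v hv v' hv' h1.symm h2.symm (fun hx => h4 hx.symm) (fun hx => h3 hx.symm)

lemma noCross_union_of_homog {G : SimpleGraph V} {A₀ B₀ C : Finset V}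
    (hom : FullyConn G C A₀ ∨ NoConn G C A₀) (hB : NoCross G B₀ C) :
    NoCross G (A₀ ∪ B₀) C := by
  intro u hu u' hu' v hv v' hv' h1 h2 h3 h4
  have huB : u ∈ B₀ := by
    rcases Finset.mem_union.1 hu with h | h
    · exfalso
      rcases hom with hf | hn
      · exact h3 (hf v' hv' u h).symm
      · exact hn v hv u h h1.symm
    · exact h
  have huB' : u' ∈ B₀ := by
    rcases Finset.mem_union.1 hu' with h | h
    · exfalso
      rcases hom with hf | hn
      · exact h4 (hf v hv u' h).symm
      · exact hn v' hv' u' h h2.symm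
    · exact h
  exact hB u huB u' huB' v hv v' hv' h1 h2 h3 h4

lemma not_both_red {G : SimpleGraph V} {Ps : Finset (Finset V)} {C A₀ B₀ : Finset V}
    (hA₀ : A₀ ∈ Ps) (hB₀ : B₀ ∈ Ps) (hne : A₀ ≠ B₀)
    (hdeg : redDegree G Ps C ≤ 1) :
    ¬ RedEdge G C A₀ ∨ ¬ RedEdge G C B₀ := by
  by_contra hc
  push_neg at hc
  have hsub : ({A₀, B₀} : Set (Finset V)) ⊆ {Q : Finset V | Q ∈ Ps ∧ RedEdge G C Q} := by
    intro x hx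
    rcases hx with rfl | rfl
    · exact ⟨hA₀, hc.1⟩
    · exact ⟨hB₀, hc.2⟩
  have h2 : 2 ≤ redDegree G Ps C := by
    have := Set.ncard_le_ncard hsub (Set.toFinite _)
    rwa [Set.ncard_pair hne] at this
  omega

lemma red_not {G : SimpleGraph V} {C A₀ : Finset V} (hne : C ≠ A₀)
    (h : ¬ RedEdge G C A₀) : FullyConn G C A₀ ∨ NoConn G C A₀ := by
  rw [RedEdge] at h
  push_neg at h
  by_cases hf : FullyConn G C A₀
  · exact Or.inl hf
  · exact Or.inr (h hne hf)

lemma key_noCross (G : SimpleGraph V) (Pseq : ℕ → Finpartition (Finset.univ : Finset V))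
    (hseq : IsPartitionSeq Pseq) (hwidth : SeqWidthLE G Pseq 1) :
    ∀ m j, 1 ≤ j → j + m = Fintype.card V →
      ∀ A ∈ (Pseq j).parts, ∀ B ∈ (Pseq j).parts, A ≠ B → NoCross G A B := by
  intro m
  induction m with
  | zero =>
    intro j hj hjm A hA B hB hAB
    have hj' : j = Fintype.card V := by omega
    subst hj'
    rw [hseq.1] at hA hB
    obtain ⟨a, -, rfl⟩ := Finset.mem_image.1 hA
    obtain ⟨b, -, rfl⟩ := Finset.mem_image.1 hB
    intro u hu u' hu' v hv v' hv' h1 h2 h3 h4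
    rw [Finset.mem_singleton] at hu hu' hv hv'
    subst hu; subst hu'; subst hv; subst hv'
    exact h3 h1
  | succ m ih =>
    intro j hj hjm A hA B hB hAB
    obtain ⟨A₀, hA₀, B₀, hB₀, hne, hparts⟩ := hseq.2 j hj (by omega)
    have hjm' : (j + 1) + m = Fintype.card V := by omega
    have ih' := ih (j + 1) (by omega) hjm'
    -- membership analysis
    rw [hparts] at hA hB
    -- helper: merged part vs old part
    have merged : ∀ C ∈ (Pseq (j+1)).parts, C ≠ A₀ → C ≠ B₀ → NoCross G (A₀ ∪ B₀) C := by
      intro C hC hCA hCB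
      have hdeg : redDegree G (Pseq (j+1)).parts C ≤ 1 :=
        hwidth (j+1) (by omega) (by omega) C hC
      rcases not_both_red hA₀ hB₀ hne hdeg with hr | hr
      · exact noCross_union_of_homog (red_not hCA hr)
          (ih' B₀ hB₀ C hC hCB.symm)
      · rw [Finset.union_comm]
        exact noCross_union_of_homog (red_not hCB hr)
          (ih' A₀ hA₀ C hC hCA.symm)
    rcases Finset.mem_union.1 hA with hA1 | hA1 <;>
      rcases Finset.mem_union.1 hB with hB1 | hB1
    · obtain ⟨hA2, hA3⟩ := Finset.mem_sdiff.1 hA1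
      obtain ⟨hB2, hB3⟩ := Finset.mem_sdiff.1 hB1
      exact ih' A hA2 B hB2 hAB
    · obtain ⟨hA2, hA3⟩ := Finset.mem_sdiff.1 hA1
      rw [Finset.mem_singleton] at hB1
      subst hB1
      simp only [Finset.mem_insert, Finset.mem_singleton, not_or] at hA3
      exact noCross_symm (merged A hA2 hA3.1 hA3.2)
    · obtain ⟨hB2, hB3⟩ := Finset.mem_sdiff.1 hB1
      rw [Finset.mem_singleton] at hA1
      subst hA1
      simp only [Finset.mem_insert, Finset.mem_singleton, not_or] at hB3
      exact merged B hB2 hB3.1 hB3.2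
    · rw [Finset.mem_singleton] at hA1 hB1
      exact absurd (hA1.trans hB1.symm) hAB

lemma noCross_chain {G : SimpleGraph V} {P Q : Finset V} (h : NoCross G P Q)
    {u u' : V} (hu : u ∈ P) (hu' : u' ∈ P) :
    (∀ v ∈ Q, G.Adj u v → G.Adj u' v) ∨ (∀ v ∈ Q, G.Adj u' v → G.Adj u v) := by
  by_contra hc
  push_neg at hc
  obtain ⟨⟨v, hv, h1, h2⟩, ⟨v', hv', h3, h4⟩⟩ := hc
  exact h u hu u' hu' v hv v' hv' h1 h3 h4 h2

lemma halfgraph_of_noCross (G : SimpleGraph V) (P Q : Finset V) (h : NoCross G P Q) :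
    IsPartialHalfGraph G P Q := by
  classical
  set c := Fintype.card V with hc
  set S := 2 * c + 2 with hS
  set ι : V → ℕ := fun v => (Fintype.equivFin V v).val with hι
  have hιlt : ∀ v : V, ι v < c := fun v => (Fintype.equivFin V v).isLt
  have hιinj : Function.Injective ι := fun a b hab =>
    (Fintype.equivFin V).injective (Fin.val_injective hab)
  set d : V → ℕ := fun u => (Q.filter (fun v => ¬ G.Adj u v)).card with hd
  set E : V → ℕ := fun v => (P.filter (fun u => G.Adj u v)).sup (fun u => d u + 1) with hE
  have hdle : ∀ u, d u ≤ c := fun u =>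
    (Finset.card_le_card (Finset.filter_subset _ _)).trans (Finset.card_le_univ Q)
  have hEle : ∀ v, E v ≤ c + 1 := by
    intro v
    apply Finset.sup_le
    intro u hu
    exact Nat.succ_le_succ (hdle u)
  -- key: adjacency iff d u + 1 ≤ E v
  have key : ∀ u ∈ P, ∀ v ∈ Q, (G.Adj u v ↔ d u + 1 ≤ E v) := by
    intro u hu v hv
    constructor
    · intro hadj
      exact Finset.le_sup (f := fun u => d u + 1) (Finset.mem_filter.2 ⟨hu, hadj⟩)
    · intro hle
      have hne : ((P.filter (fun u => G.Adj u v))).Nonempty := by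
        by_contra hemp
        rw [Finset.not_nonempty_iff_eq_empty] at hemp
        rw [hE] at hle
        simp only [hemp, Finset.sup_empty, Nat.bot_eq_zero] at hle
        omega
      obtain ⟨u₀, hu₀mem, hu₀⟩ := Finset.exists_mem_eq_sup _ hne (fun u => d u + 1)
      obtain ⟨hu₀P, hu₀adj⟩ := Finset.mem_filter.1 hu₀mem
      have hEv : E v = d u₀ + 1 := hu₀
      have hdle' : d u ≤ d u₀ := by omega
      rcases noCross_chain h hu hu₀P with hch | hch
      · -- N(u)∩Q ⊆ N(u₀)∩Q, so d u₀ ≤ d u, hence equal; conclude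
        have hsub : Q.filter (fun w => ¬ G.Adj u₀ w) ⊆ Q.filter (fun w => ¬ G.Adj u w) := by
          intro w hw
          obtain ⟨hwQ, hwn⟩ := Finset.mem_filter.1 hw
          exact Finset.mem_filter.2 ⟨hwQ, fun hadj => hwn (hch w hwQ hadj)⟩
        have heq : Q.filter (fun w => ¬ G.Adj u₀ w) = Q.filter (fun w => ¬ G.Adj u w) :=
          Finset.eq_of_subset_of_card_le hsub (by rw [hd] at hdle'; exact hdle')
        by_contra hnadj
        have : v ∈ Q.filter (fun w => ¬ G.Adj u w) := Finset.mem_filter.2 ⟨hv, hnadj⟩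
        rw [← heq] at this
        exact (Finset.mem_filter.1 this).2 hu₀adj
      · exact hch v hv hu₀adj
  -- build the embedding
  set n := (c + 2) * S with hn
  have hf_lt : ∀ u : V, (d u + 1) * S + ι u < n := by
    intro u
    have h1 : d u + 1 ≤ c + 1 := Nat.succ_le_succ (hdle u)
    have h2 : ι u < c := hιlt u
    have : (d u + 1) * S ≤ (c + 1) * S := Nat.mul_le_mul_right S h1
    have hSpos : c < S := by omega
    calc (d u + 1) * S + ι u ≤ (c + 1) * S + ι u := by omega
      _ < (c + 1) * S + S := by omega
      _ = (c + 2) * S := by ring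
  have hg_lt : ∀ v : V, E v * S + (c + 1 + ι v) < n := by
    intro v
    have h1 : E v ≤ c + 1 := hEle v
    have h2 : ι v < c := hιlt v
    have : E v * S ≤ (c + 1) * S := Nat.mul_le_mul_right S h1
    calc E v * S + (c + 1 + ι v) ≤ (c + 1) * S + (c + 1 + ι v) := by omega
      _ < (c + 1) * S + S := by omega
      _ = (c + 2) * S := by ring
  refine ⟨n, fun u => ⟨(d u + 1) * S + ι u, hf_lt u⟩,
    fun v => ⟨E v * S + (c + 1 + ι v), hg_lt v⟩, ?_, ?_, ?_⟩
  · intro a _ b _ hab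
    have hab' : (d a + 1) * S + ι a = (d b + 1) * S + ι b := congrArg Fin.val hab
    have h1 : ((d a + 1) * S + ι a) % S = ι a := by
      rw [Nat.mul_add_mod']; exact Nat.mod_eq_of_lt (by have := hιlt a; omega)
    have h2 : ((d b + 1) * S + ι b) % S = ι b := by
      rw [Nat.mul_add_mod']; exact Nat.mod_eq_of_lt (by have := hιlt b; omega)
    exact hιinj (by rw [← h1, ← h2, hab'])
  · intro a _ b _ hab
    have hab' : E a * S + (c + 1 + ι a) = E b * S + (c + 1 + ι b) := congrArg Fin.val hab
    have h1 : (E a * S + (c + 1 + ι a)) % S = c + 1 + ι a := by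
      rw [Nat.mul_add_mod']; exact Nat.mod_eq_of_lt (by have := hιlt a; omega)
    have h2 : (E b * S + (c + 1 + ι b)) % S = c + 1 + ι b := by
      rw [Nat.mul_add_mod']; exact Nat.mod_eq_of_lt (by have := hιlt b; omega)
    have : c + 1 + ι a = c + 1 + ι b := by rw [← h1, ← h2, hab']
    exact hιinj (by omega)
  · intro u hu v hv
    rw [key u hu v hv]
    simp only []
    constructor
    · intro hle
      have h1 : (d u + 1) * S ≤ E v * S := Nat.mul_le_mul_right S hle
      have h2 : ι u < c := hιlt u
      omega
    · intro hle
      by_contra hlt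
      push_neg at hlt
      have h1 : (E v + 1) * S ≤ (d u + 1) * S := Nat.mul_le_mul_right S (by omega)
      have h2 : ι v < c := hιlt v
      have h3 : ι u < c := hιlt u
      have : E v * S + S = (E v + 1) * S := by ring
      omega


end AuxHalfGraph

/-- For every graph `G`, every `1`-partition sequence of `G`, and every two distinct
parts `P, Q` of any partition in the sequence, the bipartite graph `G[P,Q]` is a
partial half-graph. -/
theorem red_cuts_are_partial_halfGraphs {V : Type} [Fintype V] [DecidableEq V]
    (G : SimpleGraph V) (Pseq : ℕ → Finpartition (Finset.univ : Finset V))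
    (hseq : IsPartitionSeq Pseq) (hwidth : SeqWidthLE G Pseq 1)
    (i : ℕ) (hi1 : 1 ≤ i) (hin : i ≤ Fintype.card V)
    (P Q : Finset V) (hP : P ∈ (Pseq i).parts) (hQ : Q ∈ (Pseq i).parts) (hPQ : P ≠ Q) :
    IsPartialHalfGraph G P Q :=
  halfgraph_of_noCross G P Q
    (key_noCross G Pseq hseq hwidth (Fintype.card V - i) i hi1 (by omega) P hP Q hQ hPQ)
end

section
/- Let t ∈ ℕ and let H be a partial half-graph with sides L and R. Then H contains the half-graph H_t as a semi-induced subgraph, with the two sides of H_t embedded into L and R respectively, if and only if rk_H(L,R) ≥ t. -/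
/-- `G` contains the half-graph `H_t` as a semi-induced subgraph with the left side
embedded into `L` and the right side embedded into `R`. -/
def HasHalfGraphBetween {V : Type} (G : SimpleGraph V) (L R : Finset V) (t : ℕ) : Prop :=
  ∃ (a b : Fin t → V), (∀ i, a i ∈ L) ∧ (∀ i, b i ∈ R) ∧
    Function.Injective a ∧ Function.Injective b ∧
    ∀ i j : Fin t, (G.Adj (a i) (b j) ↔ (i : ℕ) ≤ (j : ℕ))

/-!
If `f`, `g` witness `IsPartialHalfGraph G L R`, the neighbourhood of `u ∈ L` in `R` is
`{v ∈ R | f u ≤ g v}`, so these neighbourhoods form a chain under inclusion. The `𝔽₂`-rank is at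
most the number of distinct nonzero rows, i.e. of distinct nonempty neighbourhoods, so rank `≥ t`
yields neighbourhoods `N₀ ⊋ N₁ ⊋ ⋯ ⊋ N_{t-1} ≠ ∅`; picking `a i` with neighbourhood `N i` and
`b j ∈ N j \ N (j+1)` gives `H_t`. Conversely, the rows `a i` and columns `b j` of an `H_t` index a
unitriangular submatrix of rank `t`.
-/

open Finset

theorem Matrix.rank_le_card_of_row_mem {m n K : Type*} [Fintype m] [Fintype n] [Field K]
    (A : Matrix m n K) (T : Finset (n → K)) (hT : ∀ i, A.row i ≠ 0 → A.row i ∈ T) :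
    A.rank ≤ #T := by
  rw [A.rank_eq_finrank_span_row]
  refine (Submodule.finrank_mono (Submodule.span_le.2 ?_)).trans (finrank_span_finset_le_card T)
  rintro _ ⟨i, rfl⟩
  by_cases hi : A.row i = 0
  · simp [hi]
  · exact Submodule.subset_span (hT i hi)

theorem Matrix.rank_upperTriangular_ones (K : Type*) [Field K] (t : ℕ) :
    (of fun i j : Fin t => if i ≤ j then (1 : K) else 0).rank = t := by
  set A := of fun i j : Fin t => if i ≤ j then (1 : K) else 0
  have hA : A.IsUpperTriangular := fun i j hij => if_neg (not_le.2 hij)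
  have hdet : A.det = 1 := by simp [det_of_isUpperTriangular hA, A]
  rw [rank_of_isUnit A ((isUnit_iff_isUnit_det A).2 (hdet ▸ isUnit_one)), Fintype.card_fin]

theorem IsChain.exists_strictAnti_fin {α : Type*} [PartialOrder α] {S : Finset α}
    (hS : IsChain (· ≤ ·) (S : Set α)) {t : ℕ} (ht : t ≤ #S) :
    ∃ s : Fin t → α, StrictAnti s ∧ ∀ i, s i ∈ S := by
  classical
  let := hS.linearOrder
  let e := (univ : Finset (S : Set α)).orderEmbOfFin (k := #S) (by simp)
  refine ⟨fun i => e (Fin.castLE ht i.rev), fun i j hij => ?_, fun i => (e _).2⟩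
  exact e.strictMono ((Fin.castLE_lt_castLE_iff ht).2 (Fin.rev_lt_rev.2 hij))

theorem Finset.exists_mem_iff_le_of_strictAnti {β : Type*} {t : ℕ} {s : Fin t → Finset β}
    (hs : StrictAnti s) (hne : ∀ i, (s i).Nonempty) :
    ∃ b : Fin t → β, ∀ i j, b j ∈ s i ↔ i ≤ j := by
  have hsep : ∀ j : Fin t, ∃ x ∈ s j, ∀ i, j < i → x ∉ s i := by
    intro j
    by_cases hj : (j : ℕ) + 1 < t
    · obtain ⟨x, hx, hx'⟩ := exists_of_ssubset (hs (show j < ⟨j + 1, hj⟩ from Nat.lt_succ_self _))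
      exact ⟨x, hx, fun i hi hxi => hx' (hs.antitone (Nat.succ_le_of_lt hi) hxi)⟩
    · obtain ⟨x, hx⟩ := hne j
      exact ⟨x, hx, fun i hi => absurd i.2 (by omega)⟩
  choose b hb hb' using hsep
  exact ⟨b, fun i j => ⟨fun h => not_lt.1 fun hji => hb' j i hji h, fun h => hs.antitone h (hb j)⟩⟩

namespace SimpleGraph

variable {V : Type} (G : SimpleGraph V) [DecidableRel G.Adj]

def neighborsIn (R : Finset V) (u : V) : Finset V := {v ∈ R | G.Adj u v}

variable {G}

@[simp]
theorem mem_neighborsIn {R : Finset V} {u v : V} : v ∈ G.neighborsIn R u ↔ v ∈ R ∧ G.Adj u v :=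
  mem_filter

end SimpleGraph

section HalfGraph

variable {V : Type} {G : SimpleGraph V} {L R : Finset V} {t : ℕ}

theorem hasHalfGraphBetween_of_adj_iff (a b : Fin t → V) (ha : ∀ i, a i ∈ L) (hb : ∀ j, b j ∈ R)
    (hab : ∀ i j, G.Adj (a i) (b j) ↔ i ≤ j) : HasHalfGraphBetween G L R t := by
  refine ⟨a, b, ha, hb, fun i i' h => le_antisymm ?_ ?_, fun j j' h => le_antisymm ?_ ?_, hab⟩
  · exact (hab i i').1 (h ▸ (hab i' i').2 le_rfl)
  · exact (hab i' i).1 (h ▸ (hab i i).2 le_rfl)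
  · exact (hab j j').1 (h ▸ (hab j j).2 le_rfl)
  · exact (hab j' j).1 (h.symm ▸ (hab j' j').2 le_rfl)

theorem HasHalfGraphBetween.le_biadjRank (h : HasHalfGraphBetween G L R t) :
    t ≤ biadjRank G L R := by
  obtain ⟨a, b, ha, hb, -, -, hab⟩ := h
  unfold biadjRank
  refine le_of_eq_of_le ?_ (Matrix.rank_submatrix_le _ (fun i => (⟨a i, ha i⟩ : L))
    (fun j => (⟨b j, hb j⟩ : R)))
  refine (Matrix.rank_upperTriangular_ones (ZMod 2) t).symm.trans (congrArg Matrix.rank ?_)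
  ext i j
  simp [hab]

variable [DecidableEq V] [DecidableRel G.Adj]

theorem biadjRank_le_card_neighborsIn :
    biadjRank G L R ≤ #((L.image (G.neighborsIn R)).erase ∅) := by
  let χ : Finset V → R → ZMod 2 := fun s v => if ↑v ∈ s then 1 else 0
  refine (Matrix.rank_le_card_of_row_mem _ (((L.image _).erase ∅).image χ) ?_).trans card_image_le
  intro u hu
  refine mem_image.2 ⟨G.neighborsIn R u, mem_erase.2 ⟨?_, mem_image_of_mem _ u.2⟩, ?_⟩
  · rw [Ne, SimpleGraph.neighborsIn, filter_eq_empty_iff]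
    contrapose! hu
    funext v
    simp [Matrix.row, hu v.2]
  · funext v
    simp [χ, Matrix.row]

theorem IsPartialHalfGraph.isChain_neighborsIn (h : IsPartialHalfGraph G L R) :
    IsChain (· ≤ ·) (L.image (G.neighborsIn R) : Set (Finset V)) := by
  obtain ⟨n, f, g, -, -, hfg⟩ := h
  have hanti : ∀ u ∈ L, ∀ u' ∈ L, (f u : ℕ) ≤ f u' → G.neighborsIn R u' ⊆ G.neighborsIn R u := by
    intro u hu u' hu' hle v hv
    rw [SimpleGraph.mem_neighborsIn] at hv ⊢
    exact ⟨hv.1, (hfg u hu v hv.1).2 (hle.trans ((hfg u' hu' v hv.1).1 hv.2))⟩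
  rw [coe_image]
  rintro _ ⟨u, hu, rfl⟩ _ ⟨u', hu', rfl⟩ -
  rcases le_total (f u : ℕ) (f u') with hle | hle
  · exact Or.inr (hanti u hu u' hu' hle)
  · exact Or.inl (hanti u' hu' u hu hle)

theorem hasHalfGraphBetween_of_isChain_of_le_biadjRank
    (hchain : IsChain (· ≤ ·) (L.image (G.neighborsIn R) : Set (Finset V)))
    (ht : t ≤ biadjRank G L R) : HasHalfGraphBetween G L R t := by
  set S := (L.image (G.neighborsIn R)).erase ∅
  have hS : IsChain (· ≤ ·) (S : Set (Finset V)) := hchain.mono (by simp [S])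
  obtain ⟨s, hs, hsS⟩ := hS.exists_strictAnti_fin (ht.trans biadjRank_le_card_neighborsIn)
  have hsS' : ∀ i, s i ≠ ∅ ∧ ∃ u ∈ L, G.neighborsIn R u = s i := by simpa [S] using hsS
  choose hne a ha hsa using hsS'
  obtain ⟨b, hb⟩ := exists_mem_iff_le_of_strictAnti hs fun i => nonempty_iff_ne_empty.2 (hne i)
  have hbR : ∀ j, b j ∈ R := fun j => by
    have := (hb j j).2 le_rfl
    rw [← hsa, SimpleGraph.mem_neighborsIn] at this
    exact this.1
  refine hasHalfGraphBetween_of_adj_iff a b ha hbR fun i j => ?_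
  rw [← hb, ← hsa, SimpleGraph.mem_neighborsIn, and_iff_right (hbR j)]

end HalfGraph

theorem partialHalfGraph_halfGraph_iff_rank_general {V : Type} (G : SimpleGraph V)
    (L R : Finset V) (hpart : IsPartialHalfGraph G L R) (t : ℕ) :
    HasHalfGraphBetween G L R t ↔ t ≤ biadjRank G L R := by
  classical
  exact ⟨HasHalfGraphBetween.le_biadjRank,
    hasHalfGraphBetween_of_isChain_of_le_biadjRank hpart.isChain_neighborsIn⟩

/-- A partial half-graph `H` with sides `L` and `R` contains an induced (semi-induced,
with sides embedded into `L` and `R` respectively) half-graph `H_t` if and only if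
`rk_H(L,R) ≥ t`. -/
theorem partialHalfGraph_halfGraph_iff_rank {V : Type} (G : SimpleGraph V)
    (L R : Finset V) (hLR : Disjoint L R) (hpart : IsPartialHalfGraph G L R) (t : ℕ) :
    HasHalfGraphBetween G L R t ↔ t ≤ biadjRank G L R :=
  partialHalfGraph_halfGraph_iff_rank_general G L R hpart t
end

section
/- Let t ∈ ℕ and let H be a partial half-graph with sides L and R. If H contains a matching of size 2t−1, then H contains a biclique K_{t,t}, i.e., there exist t vertices in L and t vertices in R such that every such L-vertex is adjacent to every such R-vertex. -/
/-- If a partial half-graph `H` with sides `L`, `R` contains a matching of size `2t - 1`,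
then it contains a biclique `K_{t,t}`: `t` vertices in `L` and `t` vertices in `R` with
every such `L`-vertex adjacent to every such `R`-vertex. -/
theorem partialHalfGraph_matching_to_biclique {V : Type} (G : SimpleGraph V)
    (L R : Finset V) (hLR : Disjoint L R) (hpart : IsPartialHalfGraph G L R) (t : ℕ)
    (hmatching : ∃ a b : Fin (2 * t - 1) → V,
      (∀ i, a i ∈ L) ∧ (∀ i, b i ∈ R) ∧
      Function.Injective a ∧ Function.Injective b ∧
      ∀ i, G.Adj (a i) (b i)) :
    ∃ a b : Fin t → V,
      (∀ i, a i ∈ L) ∧ (∀ i, b i ∈ R) ∧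
      Function.Injective a ∧ Function.Injective b ∧
      ∀ i j, G.Adj (a i) (b j) := by
  rcases Nat.eq_zero_or_pos t with rfl | ht
  · exact ⟨Fin.elim0, Fin.elim0, fun i => i.elim0, fun i => i.elim0,
      fun i => i.elim0, fun i => i.elim0, fun i => i.elim0⟩
  obtain ⟨n, f, g, hfInj, hgInj, hiff⟩ := hpart
  obtain ⟨a, b, haL, hbR, haInj, hbInj, hab⟩ := hmatching
  -- sort by the position of the left endpoint
  set F : Fin (2 * t - 1) → ℕ := fun i => (f (a i) : ℕ) with hF
  set σ := Tuple.sort F with hσ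
  have hmono : Monotone (F ∘ σ) := Tuple.monotone_sort F
  have hlt1 : ∀ i : Fin t, (i : ℕ) < 2 * t - 1 := fun i => by omega
  have hlt2 : ∀ j : Fin t, t - 1 + (j : ℕ) < 2 * t - 1 := fun j => by omega
  refine ⟨fun i => a (σ ⟨i, hlt1 i⟩), fun j => b (σ ⟨t - 1 + j, hlt2 j⟩),
    fun i => haL _, fun j => hbR _, ?_, ?_, ?_⟩
  · intro i j h
    have h1 := σ.injective (haInj h)
    simp only [Fin.mk.injEq] at h1
    exact Fin.ext h1
  · intro i j h
    have h1 := σ.injective (hbInj h)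
    simp only [Fin.mk.injEq] at h1
    exact Fin.ext (by omega)
  · intro i j
    dsimp only
    rw [hiff _ (haL _) _ (hbR _)]
    have h1 : F (σ ⟨i, hlt1 i⟩) ≤ F (σ ⟨t - 1 + j, hlt2 j⟩) := by
      have : (⟨(i : ℕ), hlt1 i⟩ : Fin (2 * t - 1)) ≤ ⟨t - 1 + j, hlt2 j⟩ := by
        simp [Fin.le_def]; omega
      exact hmono this
    have h2 : F (σ ⟨t - 1 + j, hlt2 j⟩) ≤ (g (b (σ ⟨t - 1 + j, hlt2 j⟩)) : ℕ) := by
      have := hab (σ ⟨t - 1 + j, hlt2 j⟩)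
      rw [hiff _ (haL _) _ (hbR _)] at this
      exact this
    exact le_trans h1 h2
end

section
/- Let H be a partial half-graph with sides L and R in which no two distinct vertices have equal neighborhoods and no vertex has empty neighborhood. Then |L| = |R| and H is isomorphic to the half-graph H_{|L|} via an isomorphism mapping L onto {v_1,…,v_{|L|}} and R onto {w_1,…,w_{|L|}}; in particular, the vertices of L can be labelled ℓ_1,…,ℓ_n and those of R labelled r_1,…,r_n so that the neighborhood of ℓ_i is exactly {r_i,…,r_n}. -/
/-!
In a partial half-graph the neighbourhoods of the vertices of `L` form a chain under inclusion,
and so do those of `R`. If there are no twins and no isolated vertices, the degrees of the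
vertices of `L` are therefore distinct numbers in `[1, |R|]`, and symmetrically, which forces
`|L| = |R| = n` and makes both degree maps bijections onto `[1, n]`. Since the neighbourhood
of `v ∈ R` is an up-set of `L` for the degree order, `u ∼ v` holds exactly when
`deg u + deg v > n`; labelling `ℓ_i` by `deg ℓ_i = n - i` and `r_j` by `deg r_j = j + 1`
turns this into `i ≤ j`.
-/

open Finset

section

open scoped Classical

variable {α β : Type*}

noncomputable def relDegree (r : α → β → Prop) (R : Finset β) (a : α) : ℕ :=
  #{b ∈ R | r a b}

def NestedNeighborhoods (r : α → β → Prop) (L : Finset α) (R : Finset β) : Prop :=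
  ∀ a ∈ L, ∀ a' ∈ L, (∀ b ∈ R, r a b → r a' b) ∨ (∀ b ∈ R, r a' b → r a b)

def TwinFree (r : α → β → Prop) (L : Finset α) (R : Finset β) : Prop :=
  ∀ a ∈ L, ∀ a' ∈ L, (∀ b ∈ R, r a b ↔ r a' b) → a = a'

theorem nestedNeighborhoods_of_iff_le {γ : Type*} [LinearOrder γ] {r : α → β → Prop}
    {L : Finset α} {R : Finset β} {f : α → γ} {g : β → γ}
    (hr : ∀ a ∈ L, ∀ b ∈ R, r a b ↔ f a ≤ g b) : NestedNeighborhoods r L R := by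
  intro a ha a' ha'
  rcases le_total (f a) (f a') with h | h
  · exact .inr fun b hb hab => (hr a ha b hb).2 (h.trans ((hr a' ha' b hb).1 hab))
  · exact .inl fun b hb hab => (hr a' ha' b hb).2 (h.trans ((hr a ha b hb).1 hab))

theorem mapsTo_relDegree {r : α → β → Prop} {L : Finset α} {R : Finset β}
    (hL : ∀ a ∈ L, ∃ b ∈ R, r a b) :
    Set.MapsTo (relDegree r R) L (Icc 1 #R : Finset ℕ) := fun a ha => by
  obtain ⟨_, hb, hab⟩ := hL a ha
  exact mem_Icc.2 ⟨card_pos.2 ⟨_, mem_filter.2 ⟨hb, hab⟩⟩, card_filter_le _ _⟩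

theorem card_filter_lt_of_bijOn {s : Finset α} {φ : α → ℕ} {n : ℕ}
    (h : Set.BijOn φ s (Icc 1 n : Finset ℕ)) (k : ℕ) : #{x ∈ s | k < φ x} = n - k := by
  rw [← Nat.card_Ioc k n]
  refine card_nbij φ (fun x hx => ?_) (h.injOn.mono fun x hx => (mem_filter.1 hx).1)
    fun m hm => ?_
  · obtain ⟨hxs, hkx⟩ := mem_filter.1 hx
    exact mem_Ioc.2 ⟨hkx, (mem_Icc.1 (h.mapsTo hxs)).2⟩
  · obtain ⟨hkm, hmn⟩ := mem_Ioc.1 (mem_coe.1 hm)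
    obtain ⟨x, hxs, rfl⟩ := h.surjOn (mem_coe.2 (mem_Icc.2 ⟨by omega, hmn⟩))
    exact ⟨x, mem_filter.2 ⟨hxs, hkm⟩, rfl⟩

theorem exists_enum_of_bijOn {s : Finset α} {φ : α → ℕ} {n : ℕ}
    (h : Set.BijOn φ s (Icc 1 n : Finset ℕ)) :
    ∃ e : Fin n → α, Function.Injective e ∧ (∀ i, e i ∈ s) ∧ (∀ x ∈ s, ∃ i, e i = x) ∧
      ∀ i, φ (e i) = i + 1 := by
  have hsurj (i : Fin n) : ∃ x ∈ s, φ x = i + 1 :=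
    h.surjOn (mem_coe.2 (mem_Icc.2 ⟨by omega, i.2⟩))
  choose e hes heφ using hsurj
  refine ⟨e, fun i j hij => Fin.ext ?_, hes, fun x hx => ?_, heφ⟩
  · have := heφ i
    rw [hij, heφ j] at this
    omega
  · have hφx := mem_Icc.1 (h.mapsTo hx)
    refine ⟨⟨φ x - 1, by omega⟩, h.injOn (hes _) hx ?_⟩
    rw [heφ, Fin.val_mk]
    omega

namespace NestedNeighborhoods

variable {r : α → β → Prop} {L : Finset α} {R : Finset β}

theorem rel_of_relDegree_le (h : NestedNeighborhoods r L R) {a a' : α} (ha : a ∈ L)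
    (ha' : a' ∈ L) (hle : relDegree r R a ≤ relDegree r R a') {b : β} (hb : b ∈ R)
    (hab : r a b) : r a' b := by
  rcases h a ha a' ha' with hsub | hsub
  · exact hsub b hb hab
  · have hmono : {b ∈ R | r a' b} ⊆ {b ∈ R | r a b} := fun b hb => by
      obtain ⟨hbR, hab'⟩ := mem_filter.1 hb
      exact mem_filter.2 ⟨hbR, hsub b hbR hab'⟩
    have heq := eq_of_subset_of_card_le hmono hle
    exact (mem_filter.1 (heq ▸ mem_filter.2 ⟨hb, hab⟩ : b ∈ {b ∈ R | r a' b})).2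

theorem injOn_relDegree (h : NestedNeighborhoods r L R) (ht : TwinFree r L R) :
    Set.InjOn (relDegree r R) L := fun a ha a' ha' hdeg =>
  ht a ha a' ha' fun _ hb =>
    ⟨h.rel_of_relDegree_le ha ha' hdeg.le hb, h.rel_of_relDegree_le ha' ha hdeg.ge hb⟩

theorem card_le_card (h : NestedNeighborhoods r L R) (ht : TwinFree r L R)
    (hL : ∀ a ∈ L, ∃ b ∈ R, r a b) : #L ≤ #R := by
  simpa using card_le_card_of_injOn _ (mapsTo_relDegree hL) (h.injOn_relDegree ht)

theorem bijOn_relDegree (h : NestedNeighborhoods r L R) (ht : TwinFree r L R)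
    (hL : ∀ a ∈ L, ∃ b ∈ R, r a b) (hcard : #L = #R) :
    Set.BijOn (relDegree r R) L (Icc 1 #L : Finset ℕ) := by
  rw [hcard]
  exact ⟨mapsTo_relDegree hL, h.injOn_relDegree ht, surjOn_of_injOn_of_card_le _
    (mapsTo_relDegree hL) (h.injOn_relDegree ht) (by simp [hcard])⟩

theorem rel_iff_lt_relDegree_add (h : NestedNeighborhoods r L R) {n : ℕ}
    (hbij : Set.BijOn (relDegree r R) L (Icc 1 n : Finset ℕ)) {a : α} (ha : a ∈ L) {b : β}
    (hb : b ∈ R) : r a b ↔ n < relDegree r R a + relDegree (flip r) L b := by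
  have hdeg := mem_Icc.1 (hbij.mapsTo ha)
  have hcount := card_filter_lt_of_bijOn hbij
  have hdeg' : relDegree (flip r) L b = #{a' ∈ L | r a' b} := rfl
  rw [hdeg']
  constructor
  · intro hab
    have hup : {a' ∈ L | relDegree r R a - 1 < relDegree r R a'} ⊆ {a' ∈ L | r a' b} :=
      fun a' ha' => by
        obtain ⟨ha'L, hlt⟩ := mem_filter.1 ha'
        exact mem_filter.2 ⟨ha'L, h.rel_of_relDegree_le ha ha'L (by omega) hb hab⟩
    have := Finset.card_le_card hup
    rw [hcount] at this
    omega
  · intro hlt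
    by_contra hab
    have hdown : {a' ∈ L | r a' b} ⊆ {a' ∈ L | relDegree r R a < relDegree r R a'} :=
      fun a' ha' => by
        obtain ⟨ha'L, ha'b⟩ := mem_filter.1 ha'
        refine mem_filter.2 ⟨ha'L, not_le.1 fun hle => hab ?_⟩
        exact h.rel_of_relDegree_le ha'L ha hle hb ha'b
    have := Finset.card_le_card hdown
    rw [hcount] at this
    omega

end NestedNeighborhoods

end

theorem partialHalfGraph_no_twins_iso_halfGraph_general {V : Type} (G : SimpleGraph V)
    (L R : Finset V) (hpart : IsPartialHalfGraph G L R)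
    (htwinL : ∀ u ∈ L, ∀ u' ∈ L, (∀ v ∈ R, G.Adj u v ↔ G.Adj u' v) → u = u')
    (htwinR : ∀ v ∈ R, ∀ v' ∈ R, (∀ u ∈ L, G.Adj u v ↔ G.Adj u v') → v = v')
    (hnonL : ∀ u ∈ L, ∃ v ∈ R, G.Adj u v)
    (hnonR : ∀ v ∈ R, ∃ u ∈ L, G.Adj u v) :
    L.card = R.card ∧
    ∃ (l r : Fin L.card → V),
      Function.Injective l ∧ Function.Injective r ∧
      (∀ i, l i ∈ L) ∧ (∀ i, r i ∈ R) ∧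
      (∀ u ∈ L, ∃ i, l i = u) ∧ (∀ v ∈ R, ∃ i, r i = v) ∧
      ∀ i j : Fin L.card, (G.Adj (l i) (r j) ↔ (i : ℕ) ≤ (j : ℕ)) := by
  obtain ⟨n, f, g, -, -, hadj⟩ := hpart
  have hL : NestedNeighborhoods G.Adj L R := nestedNeighborhoods_of_iff_le hadj
  -- seen from `R`, the same comparison is `g v ≤ f u` in the reversed order
  have hR : NestedNeighborhoods (flip G.Adj) R L :=
    nestedNeighborhoods_of_iff_le (f := fun v => OrderDual.toDual (g v : ℕ))
      (g := fun u => OrderDual.toDual (f u : ℕ)) fun v hv u hu => hadj u hu v hv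
  have hcard : #L = #R :=
    le_antisymm (hL.card_le_card htwinL hnonL) (hR.card_le_card htwinR hnonR)
  have hbijL := hL.bijOn_relDegree htwinL hnonL hcard
  have hbijR := hR.bijOn_relDegree htwinR hnonR hcard.symm
  rw [← hcard] at hbijR
  obtain ⟨l, hl_inj, hlL, hl_surj, hl_deg⟩ := exists_enum_of_bijOn hbijL
  obtain ⟨r, hr_inj, hrR, hr_surj, hr_deg⟩ := exists_enum_of_bijOn hbijR
  refine ⟨hcard, l ∘ Fin.rev, r, hl_inj.comp Fin.rev_injective, hr_inj, fun i => hlL _, hrR,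
    fun u hu => ?_, hr_surj, fun i j => ?_⟩
  · obtain ⟨i, rfl⟩ := hl_surj u hu
    exact ⟨i.rev, by simp⟩
  · rw [Function.comp_apply, hL.rel_iff_lt_relDegree_add hbijL (hlL _) (hrR j), hl_deg, hr_deg,
      Fin.val_rev]
    omega

/-- A partial half-graph `H` with sides `L`, `R` in which no two distinct vertices of the
same side have equal neighborhoods (in `H`) and no vertex has empty neighborhood satisfies
`|L| = |R|` and is isomorphic to the half-graph `H_{|L|}` via an isomorphism mapping `L`
onto the left side and `R` onto the right side: the vertices can be labelled
`ℓ_1, …, ℓ_n` and `r_1, …, r_n` so that `ℓ_i` is adjacent to `r_j` exactly when `i ≤ j`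
(i.e. the neighborhood of `ℓ_i` is exactly `{r_i, …, r_n}`). -/
theorem partialHalfGraph_no_twins_iso_halfGraph {V : Type} (G : SimpleGraph V)
    (L R : Finset V) (hLR : Disjoint L R) (hpart : IsPartialHalfGraph G L R)
    (htwinL : ∀ u ∈ L, ∀ u' ∈ L, (∀ v ∈ R, G.Adj u v ↔ G.Adj u' v) → u = u')
    (htwinR : ∀ v ∈ R, ∀ v' ∈ R, (∀ u ∈ L, G.Adj u v ↔ G.Adj u v') → v = v')
    (hnonL : ∀ u ∈ L, ∃ v ∈ R, G.Adj u v)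
    (hnonR : ∀ v ∈ R, ∃ u ∈ L, G.Adj u v) :
    L.card = R.card ∧
    ∃ (l r : Fin L.card → V),
      Function.Injective l ∧ Function.Injective r ∧
      (∀ i, l i ∈ L) ∧ (∀ i, r i ∈ R) ∧
      (∀ u ∈ L, ∃ i, l i = u) ∧ (∀ v ∈ R, ∃ i, r i = v) ∧
      ∀ i j : Fin L.card, (G.Adj (l i) (r j) ↔ (i : ℕ) ≤ (j : ℕ)) :=
  partialHalfGraph_no_twins_iso_halfGraph_general G L R hpart htwinL htwinR hnonL hnonR
end

section
/- Let G be a graph with a 2-partition sequence (P_i)_{i∈[n]}, and suppose that for some m ∈ [n] there exist four parts X_1, X_2, X_3, X_4 ∈ P_m such that X_1X_2, X_2X_3 and X_3X_4 are red edges of G/P_m, X_1X_4 is not a red edge of G/P_m, and the induced subgraph G[X_1∪X_2∪X_3∪X_4] contains 3t−2 pairwise vertex-disjoint paths from X_1 to X_4. Then G contains a semi-induced biclique K_{t,t}, i.e., there exist disjoint sets A, B ⊆ V(G) with |A| = |B| = t such that every vertex of A is adjacent to every vertex of B. -/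
/-- `G` contains a semi-induced biclique `K_{t,t}`: two disjoint sets of `t` vertices
each with every cross pair adjacent. -/
def HasKtt {V : Type} (G : SimpleGraph V) (t : ℕ) : Prop :=
  ∃ a b : Fin t → V,
    Function.Injective a ∧ Function.Injective b ∧ (∀ i j, a i ≠ b j) ∧
    ∀ i j, G.Adj (a i) (b j)

/-- The induced subgraph `G[X]` contains `m` pairwise vertex-disjoint paths from `A`
to `B` (paths of `G` whose vertices all lie in `X`). -/
def HasDisjointPaths {V : Type} (G : SimpleGraph V) (X A B : Finset V) (m : ℕ) : Prop :=
  ∃ (u v : Fin m → V) (p : ∀ i, G.Walk (u i) (v i)),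
    (∀ i, u i ∈ A) ∧ (∀ i, v i ∈ B) ∧
    (∀ i, (p i).IsPath) ∧
    (∀ i, ∀ x ∈ (p i).support, x ∈ X) ∧
    ∀ i j, i ≠ j → ∀ x ∈ (p i).support, x ∉ (p j).support

/-!
Walking up the partition sequence from `P_m` towards the partition into singletons, we maintain a
configuration in the current partition: parts `W₀ W₁ W₂ W₃` forming a red path whose
non-consecutive pairs are disconnected, `k` disjoint `W₀`–`W₃` paths with inner vertices in
`W₁ ∪ W₂`, and reservoirs `S₁`, `S₂` of fewer than `t` vertices, fully connected to `W₁` and `W₂`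
and disjoint from the path, subject to the potential `3t ≤ k + |S₁| + |S₂| + 2`. The potential
forces `k ≥ t`, so each `Wᵢ` has at least `t` vertices, and any set of at least `t` vertices fully
connected to one of them gives a semi-induced `K_{t,t}`.

When a part of the path splits into `A ∪ B`, red degree at most two leaves at most one half, say
`A`, red towards the next part of the path. Unless some fully connected pair is large, `A` takes
over the role of the part, and either no path meets `B`, or `B` joins a reservoir while the at
most `|B|` paths through it are dropped, which keeps the potential. (When an inner part splits,
`B` may instead become the new end part, the paths being cut at their last vertex in `B`.)
Singletons span no red edge, so the configuration cannot survive to the end of the sequence.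
-/

section

open Finset

variable {V : Type} {G : SimpleGraph V} {P Q R P' Q' : Finset V}

theorem FullyConn.symm (h : FullyConn G P Q) : FullyConn G Q P :=
  fun u hu v hv => (h v hv u hu).symm

theorem NoConn.symm (h : NoConn G P Q) : NoConn G Q P :=
  fun u hu v hv huv => h v hv u hu huv.symm

theorem RedEdge.symm (h : RedEdge G P Q) : RedEdge G Q P :=
  ⟨h.1.symm, fun hF => h.2.1 hF.symm, fun hN => h.2.2 hN.symm⟩

theorem FullyConn.mono (h : FullyConn G P Q) (hP : P' ⊆ P) (hQ : Q' ⊆ Q) : FullyConn G P' Q' :=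
  fun u hu v hv => h u (hP hu) v (hQ hv)

theorem NoConn.mono (h : NoConn G P Q) (hP : P' ⊆ P) (hQ : Q' ⊆ Q) : NoConn G P' Q' :=
  fun u hu v hv => h u (hP hu) v (hQ hv)

theorem fullyConn_or_noConn_of_not_redEdge (hne : P ≠ Q) (h : ¬ RedEdge G P Q) :
    FullyConn G P Q ∨ NoConn G P Q := by
  unfold RedEdge at h
  tauto

theorem not_redEdge_singleton (a b : V) : ¬ RedEdge G {a} {b} := by
  rintro ⟨-, hF, hN⟩
  by_cases hab : G.Adj a b
  · exact hF (by simpa [FullyConn] using hab)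
  · exact hN (by simpa [NoConn] using hab)

theorem not_redEdge_of_redDegree_le_two {Ps : Finset (Finset V)} {Q₁ Q₂ Q₃ : Finset V}
    (hdeg : redDegree G Ps P ≤ 2) (h₁ : Q₁ ∈ Ps) (h₂ : Q₂ ∈ Ps) (h₃ : Q₃ ∈ Ps)
    (h₁₂ : Q₁ ≠ Q₂) (h₁₃ : Q₁ ≠ Q₃) (h₂₃ : Q₂ ≠ Q₃)
    (hr₁ : RedEdge G P Q₁) (hr₂ : RedEdge G P Q₂) : ¬ RedEdge G P Q₃ := by
  intro hr₃
  have hsub : ({Q₁, Q₂, Q₃} : Set (Finset V)) ⊆ {Q | Q ∈ Ps ∧ RedEdge G P Q} := by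
    rintro Q (rfl | rfl | rfl)
    exacts [⟨h₁, hr₁⟩, ⟨h₂, hr₂⟩, ⟨h₃, hr₃⟩]
  have hcard := Set.ncard_le_ncard hsub (Set.toFinite _)
  rw [Set.ncard_eq_three.2 ⟨Q₁, Q₂, Q₃, h₁₂, h₁₃, h₂₃, rfl⟩] at hcard
  exact absurd (hcard.trans hdeg) (by norm_num)

theorem hasKtt_of_fullyConn {t : ℕ} (h : FullyConn G P Q) (hd : Disjoint P Q)
    (hP : t ≤ #P) (hQ : t ≤ #Q) : HasKtt G t := by
  obtain ⟨a⟩ := Function.Embedding.nonempty_of_card_le (α := Fin t) (β := P) (by simpa)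
  obtain ⟨b⟩ := Function.Embedding.nonempty_of_card_le (α := Fin t) (β := Q) (by simpa)
  refine ⟨fun i => a i, fun i => b i, fun i j hij => a.injective (Subtype.ext hij),
    fun i j hij => b.injective (Subtype.ext hij), fun i j hij => ?_,
    fun i j => h _ (a i).2 _ (b j).2⟩
  exact disjoint_left.1 hd (a i).2 (by simp only at hij; exact hij ▸ (b j).2)

variable [DecidableEq V]

theorem FullyConn.union_left (hP : FullyConn G P R) (hQ : FullyConn G Q R) :
    FullyConn G (P ∪ Q) R := by
  intro u hu
  rcases mem_union.1 hu with hu | hu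
  exacts [hP u hu, hQ u hu]

theorem NoConn.union_left (hP : NoConn G P R) (hQ : NoConn G Q R) : NoConn G (P ∪ Q) R := by
  intro u hu
  rcases mem_union.1 hu with hu | hu
  exacts [hP u hu, hQ u hu]

theorem fullyConn_and_noConn_or_of_redEdge_union (hred : RedEdge G (P ∪ Q) R)
    (hP : P ≠ R) (hQ : Q ≠ R) (hPR : ¬ RedEdge G P R) (hQR : ¬ RedEdge G Q R) :
    FullyConn G P R ∧ NoConn G Q R ∨ NoConn G P R ∧ FullyConn G Q R := by
  rcases fullyConn_or_noConn_of_not_redEdge hP hPR with hP | hP <;>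
    rcases fullyConn_or_noConn_of_not_redEdge hQ hQR with hQ | hQ
  exacts [(hred.2.1 (hP.union_left hQ)).elim, .inl ⟨hP, hQ⟩, .inr ⟨hP, hQ⟩,
    (hred.2.2 (hP.union_left hQ)).elim]

end

theorem List.exists_eq_append_cons_forall_not {α : Type*} {p : α → Prop} :
    ∀ {l : List α}, (∃ x ∈ l, p x) → ∃ l₁ b l₂, l = l₁ ++ b :: l₂ ∧ p b ∧ ∀ x ∈ l₂, ¬ p x
  | [], ⟨_, hx, _⟩ => absurd hx List.not_mem_nil
  | a :: l, ⟨x, hx, hpx⟩ => by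
    by_cases hl : ∃ y ∈ l, p y
    · obtain ⟨l₁, b, l₂, rfl, hb, hl₂⟩ := exists_eq_append_cons_forall_not hl
      exact ⟨a :: l₁, b, l₂, rfl, hb, hl₂⟩
    · push Not at hl
      obtain rfl | hx := List.mem_cons.1 hx
      · exact ⟨[], x, l, rfl, hpx, hl⟩
      · exact absurd hpx (hl x hx)

structure Linkage {V : Type} (G : SimpleGraph V) (W₀ W₁ W₂ W₃ : Finset V) (k : ℕ) where
  src : Fin k → V
  dst : Fin k → V
  inner : Fin k → List V
  src_mem : ∀ i, src i ∈ W₀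
  dst_mem : ∀ i, dst i ∈ W₃
  inner_ne_nil : ∀ i, inner i ≠ []
  mem_of_mem_inner : ∀ i, ∀ x ∈ inner i, x ∈ W₁ ∨ x ∈ W₂
  isChain : ∀ i, (src i :: (inner i ++ [dst i])).IsChain G.Adj
  disjoint : Pairwise fun i j =>
    (src i :: (inner i ++ [dst i])).Disjoint (src j :: (inner j ++ [dst j]))

namespace Linkage

open Finset

variable {V : Type} {G : SimpleGraph V} {W₀ W₁ W₂ W₃ : Finset V} {k : ℕ}
  (L : Linkage G W₀ W₁ W₂ W₃ k)

def path (i : Fin k) : List V := L.src i :: (L.inner i ++ [L.dst i])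

theorem isChain_path (i : Fin k) : (L.path i).IsChain G.Adj := L.isChain i

theorem disjoint_path {i j : Fin k} (h : i ≠ j) : (L.path i).Disjoint (L.path j) := L.disjoint h

theorem src_mem_path (i : Fin k) : L.src i ∈ L.path i := List.mem_cons_self

theorem mem_path_of_mem_inner {i : Fin k} {x : V} (hx : x ∈ L.inner i) : x ∈ L.path i := by
  simp [path, hx]

theorem mem_inner_of_mem_path {i : Fin k} {x : V} (hx : x ∈ L.path i) (h₀ : x ∉ W₀)
    (h₃ : x ∉ W₃) : x ∈ L.inner i := by
  simp only [path, List.mem_cons, List.mem_append, List.not_mem_nil, or_false] at hx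
  rcases hx with rfl | hx | rfl
  exacts [(h₀ (L.src_mem i)).elim, hx, (h₃ (L.dst_mem i)).elim]

theorem card_le_card_of_mem_path (I : Finset (Fin k)) {X : Finset V} (f : Fin k → V)
    (hf : ∀ i ∈ I, f i ∈ L.path i) (hX : ∀ i ∈ I, f i ∈ X) : #I ≤ #X :=
  card_le_card_of_injOn f hX fun i hi j hj hij =>
    by_contra fun hne => L.disjoint_path hne (hf i hi) (hij ▸ hf j hj)

theorem le_card_of_mem_path {X : Finset V} (f : Fin k → V) (hf : ∀ i, f i ∈ L.path i)
    (hX : ∀ i, f i ∈ X) : k ≤ #X := by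
  simpa using L.card_le_card_of_mem_path univ f (fun i _ => hf i) (fun i _ => hX i)

def first (i : Fin k) : V := (L.inner i).head (L.inner_ne_nil i)

def last (i : Fin k) : V := (L.inner i).getLast (L.inner_ne_nil i)

theorem first_mem_inner (i : Fin k) : L.first i ∈ L.inner i := List.head_mem _

theorem last_mem_inner (i : Fin k) : L.last i ∈ L.inner i := List.getLast_mem _

theorem first_mem_path (i : Fin k) : L.first i ∈ L.path i :=
  L.mem_path_of_mem_inner (L.first_mem_inner i)

theorem last_mem_path (i : Fin k) : L.last i ∈ L.path i :=
  L.mem_path_of_mem_inner (L.last_mem_inner i)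

theorem adj_src_first (i : Fin k) : G.Adj (L.src i) (L.first i) := by
  have h := L.isChain i
  rw [← List.cons_head_tail (L.inner_ne_nil i), List.cons_append, List.isChain_cons_cons] at h
  exact h.1

theorem adj_last_dst (i : Fin k) : G.Adj (L.last i) (L.dst i) := by
  have h := (L.isChain i).tail
  rw [List.tail_cons, ← List.dropLast_append_getLast (L.inner_ne_nil i), List.append_assoc,
    List.singleton_append] at h
  exact List.isChain_pair.1 (h.right_of_append)

theorem first_mem (h : NoConn G W₀ W₂) (i : Fin k) : L.first i ∈ W₁ :=
  (L.mem_of_mem_inner i _ (L.first_mem_inner i)).resolve_right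
    fun h₂ => h _ (L.src_mem i) _ h₂ (L.adj_src_first i)

theorem last_mem (h : NoConn G W₁ W₃) (i : Fin k) : L.last i ∈ W₂ :=
  (L.mem_of_mem_inner i _ (L.last_mem_inner i)).resolve_left
    fun h₁ => h _ h₁ _ (L.dst_mem i) (L.adj_last_dst i)

theorem le_card_W₀ (L : Linkage G W₀ W₁ W₂ W₃ k) : k ≤ #W₀ :=
  L.le_card_of_mem_path _ L.src_mem_path L.src_mem

theorem le_card_W₁ (L : Linkage G W₀ W₁ W₂ W₃ k) (h : NoConn G W₀ W₂) : k ≤ #W₁ :=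
  L.le_card_of_mem_path _ L.first_mem_path (L.first_mem h)

theorem le_card_W₂ (L : Linkage G W₀ W₁ W₂ W₃ k) (h : NoConn G W₁ W₃) : k ≤ #W₂ :=
  L.le_card_of_mem_path _ L.last_mem_path (L.last_mem h)

theorem exists_adj_of_noConn (h₀₂ : NoConn G W₀ W₂) (h₁₃ : NoConn G W₁ W₃) (i : Fin k) :
    ∃ y ∈ L.inner i, y ∈ W₁ ∧ ∃ z ∈ W₂, G.Adj y z := by
  by_contra! H
  have hchain : (L.inner i).IsChain G.Adj := (L.isChain i).tail.left_of_append
  refine (List.IsChain.iff_mem.1 hchain).induction (· ∉ W₂) _ ?_ ?_ _ (L.last_mem_inner i)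
    (L.last_mem h₁₃ i)
  · rintro x y ⟨hx, -, hxy⟩ hx₂ hy₂
    exact H x hx ((L.mem_of_mem_inner i x hx).resolve_right hx₂) y hy₂ hxy
  · exact fun _ h₂ => h₀₂ _ (L.src_mem i) _ h₂ (L.adj_src_first i)

def reverse : Linkage G W₃ W₂ W₁ W₀ k where
  src := L.dst
  dst := L.src
  inner i := (L.inner i).reverse
  src_mem := L.dst_mem
  dst_mem := L.src_mem
  inner_ne_nil i := by simpa using L.inner_ne_nil i
  mem_of_mem_inner i x hx := (L.mem_of_mem_inner i x (List.mem_reverse.1 hx)).symm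
  isChain i := by
    simpa using List.isChain_reverse.2 ((L.isChain i).imp fun _ _ h => h.symm)
  disjoint i j hij := by
    simpa using List.disjoint_reverse_left.2 (List.disjoint_reverse_right.2 (L.disjoint hij))

theorem exists_last_mem_inner (i : Fin k) {B : Finset V} (hB : ∃ x ∈ L.inner i, x ∈ B) :
    ∃ b ∈ B, ∃ M : List V, (∀ x ∈ M, x ∈ L.inner i ∧ x ∉ B) ∧
      b :: (M ++ [L.dst i]) <:+ L.path i := by
  obtain ⟨l₁, b, M, hi, hb, hM⟩ := List.exists_eq_append_cons_forall_not hB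
  exact ⟨b, hb, M, fun x hx => ⟨by simp [hi, hx], hM x hx⟩, ⟨L.src i :: l₁, by simp [path, hi]⟩⟩

variable [DecidableEq V]

theorem le_card_add_card (L : Linkage G W₀ W₁ W₂ W₃ k) : k ≤ #W₁ + #W₂ :=
  (L.le_card_of_mem_path (X := W₁ ∪ W₂) L.first L.first_mem_path
    fun i => mem_union.2 (L.mem_of_mem_inner i _ (L.first_mem_inner i))).trans (card_union_le _ _)

theorem nonempty_truncate {B W₁' : Finset V} (hB : ∀ i, ∃ x ∈ L.inner i, x ∈ B)
    (h₁ : W₁ ⊆ W₁' ∪ B) (hB₃ : NoConn G B W₃) : Nonempty (Linkage G B W₁' W₂ W₃ k) := by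
  have key : ∀ i, ∃ b M, b ∈ B ∧ M ≠ [] ∧ (∀ x ∈ M, x ∈ W₁' ∨ x ∈ W₂) ∧
      b :: (M ++ [L.dst i]) <:+ L.path i := by
    intro i
    obtain ⟨b, hb, M, hM, hsuf⟩ := L.exists_last_mem_inner i (hB i)
    refine ⟨b, M, hb, ?_, fun x hx => ?_, hsuf⟩
    · rintro rfl
      exact hB₃ b hb _ (L.dst_mem i) (List.isChain_pair.1 ((L.isChain_path i).suffix hsuf))
    · obtain ⟨hx, hxB⟩ := hM x hx
      exact (L.mem_of_mem_inner i x hx).imp_left fun h => (mem_union.1 (h₁ h)).resolve_right hxB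
  choose b M hb hM hMW hsuf using key
  exact ⟨{
    src := b
    dst := L.dst
    inner := M
    src_mem := hb
    dst_mem := L.dst_mem
    inner_ne_nil := hM
    mem_of_mem_inner := hMW
    isChain := fun i => (L.isChain_path i).suffix (hsuf i)
    disjoint := fun i j hij _ hxi hxj =>
      L.disjoint_path hij ((hsuf i).subset hxi) ((hsuf j).subset hxj) }⟩

def avoiders (B : Finset V) : Finset (Fin k) := {i | ∀ x ∈ L.path i, x ∉ B}

theorem mem_avoiders {B : Finset V} {i : Fin k} : i ∈ L.avoiders B ↔ ∀ x ∈ L.path i, x ∉ B := by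
  simp [avoiders]

theorem le_card_avoiders_add_card (B : Finset V) : k ≤ #(L.avoiders B) + #B := by
  have h (i : Fin k) : ∃ x ∈ L.path i, (∃ y ∈ L.path i, y ∈ B) → x ∈ B := by
    by_cases hi : ∃ y ∈ L.path i, y ∈ B
    · obtain ⟨y, hy, hyB⟩ := hi
      exact ⟨y, hy, fun _ => hyB⟩
    · exact ⟨L.src i, L.src_mem_path i, fun h => (hi h).elim⟩
  choose f hf hfB using h
  have := L.card_le_card_of_mem_path {i | ¬ ∀ x ∈ L.path i, x ∉ B} f (fun i _ => hf i)
    fun i hi => hfB i (by simpa using hi)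
  have := card_filter_add_card_filter_not (s := univ) fun i => ∀ x ∈ L.path i, x ∉ B
  simp only [card_univ, Fintype.card_fin] at this
  unfold avoiders
  omega

theorem card_avoiders_of_forall {B : Finset V} (h : ∀ i, ∀ x ∈ L.path i, x ∉ B) :
    #(L.avoiders B) = k := by
  simp [avoiders, filter_true_of_mem fun i _ => h i]

def avoid (B : Finset V) {W₀' W₁' : Finset V} (h₀ : W₀ ⊆ W₀' ∪ B) (h₁ : W₁ ⊆ W₁' ∪ B) :
    Linkage G W₀' W₁' W₂ W₃ #(L.avoiders B) :=
  let f := (L.avoiders B).orderEmbOfFin rfl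
  have hf (j : Fin #(L.avoiders B)) : ∀ x ∈ L.path (f j), x ∉ B :=
    L.mem_avoiders.1 (orderEmbOfFin_mem _ rfl j)
  { src := fun j => L.src (f j)
    dst := fun j => L.dst (f j)
    inner := fun j => L.inner (f j)
    src_mem := fun j =>
      (mem_union.1 (h₀ (L.src_mem (f j)))).resolve_right (hf j _ (L.src_mem_path (f j)))
    dst_mem := fun j => L.dst_mem (f j)
    inner_ne_nil := fun j => L.inner_ne_nil (f j)
    mem_of_mem_inner := fun j x hx => (L.mem_of_mem_inner (f j) x hx).imp_left fun h =>
      (mem_union.1 (h₁ h)).resolve_right (hf j x (L.mem_path_of_mem_inner hx))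
    isChain := fun j => L.isChain (f j)
    disjoint := fun _ _ hij => L.disjoint (f.injective.ne hij) }

end Linkage

theorem SimpleGraph.Walk.exists_infix_support_between {V : Type} [DecidableEq V]
    {G : SimpleGraph V} {u v : V} (p : G.Walk u v) {X Y : Finset V} (hu : u ∈ X) (hv : v ∈ Y)
    (hXY : Disjoint X Y) :
    ∃ x M y, x ∈ X ∧ y ∈ Y ∧ (∀ z ∈ M, z ∉ X ∧ z ∉ Y) ∧ x :: (M ++ [y]) <:+: p.support := by
  obtain ⟨y, hy⟩ := Option.isSome_iff_exists.1
    (List.find?_isSome (p := fun z => decide (z ∈ Y)).2 ⟨v, p.end_mem_support, by simpa⟩)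
  obtain ⟨hyY, l₁, l₂, hsupp, hl₁⟩ := List.find?_eq_some_iff_append.1 hy
  simp only [decide_eq_true_eq, Bool.not_eq_true', decide_eq_false_iff_not] at hyY hl₁
  have hul₁ : u ∈ l₁ := by
    have hs := p.cons_tail_support
    rw [hsupp] at hs
    cases l₁ with
    | nil =>
      simp only [List.nil_append, List.tail_cons, List.cons.injEq] at hs
      exact absurd (hs.1 ▸ hu) (Finset.disjoint_right.1 hXY hyY)
    | cons a l =>
      simp only [List.cons_append, List.tail_cons, List.cons.injEq] at hs
      exact hs.1 ▸ List.mem_cons_self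
  obtain ⟨l₀, x, M, rfl, hx, hM⟩ := List.exists_eq_append_cons_forall_not ⟨u, hul₁, hu⟩
  exact ⟨x, M, y, hx, hyY, fun z hz => ⟨hM z hz, hl₁ z (by simp [hz])⟩,
    ⟨l₀, l₂, by simp [hsupp]⟩⟩

namespace HasDisjointPaths

open Finset

variable {V : Type} {G : SimpleGraph V}

theorem le_card {X A B : Finset V} {m : ℕ} (h : HasDisjointPaths G X A B m) :
    m ≤ #A ∧ m ≤ #B := by
  obtain ⟨u, v, p, hu, hv, -, -, hdis⟩ := h
  have hinj (f : Fin m → V) (hf : ∀ i, f i ∈ (p i).support) : Function.Injective f :=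
    fun i j hij => by_contra fun hne => hdis i j hne _ (hf i) (hij ▸ hf j)
  constructor
  · simpa using card_le_card_of_injOn (s := univ) u (fun i _ => hu i)
      (hinj u fun i => (p i).start_mem_support).injOn
  · simpa using card_le_card_of_injOn (s := univ) v (fun i _ => hv i)
      (hinj v fun i => (p i).end_mem_support).injOn

variable [DecidableEq V]

theorem nonempty_linkage {X₁ X₂ X₃ X₄ : Finset V} {m : ℕ}
    (h : HasDisjointPaths G (X₁ ∪ X₂ ∪ X₃ ∪ X₄) X₁ X₄ m) (hd : Disjoint X₁ X₄)
    (hN : NoConn G X₁ X₄) : Nonempty (Linkage G X₁ X₂ X₃ X₄ m) := by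
  obtain ⟨u, v, p, hu, hv, -, hX, hdis⟩ := h
  have key (i : Fin m) : ∃ y M z, y ∈ X₁ ∧ z ∈ X₄ ∧ M ≠ [] ∧ (∀ x ∈ M, x ∈ X₂ ∨ x ∈ X₃) ∧
      y :: (M ++ [z]) <:+: (p i).support := by
    obtain ⟨y, M, z, hy, hz, hM, hinf⟩ := (p i).exists_infix_support_between (hu i) (hv i) hd
    refine ⟨y, M, z, hy, hz, ?_, fun x hx => ?_, hinf⟩
    · rintro rfl
      exact hN y hy z hz
        (List.isChain_pair.1 (by simpa using (p i).isChain_adj_support.infix hinf))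
    · have := hX i x (hinf.subset (by simp [hx]))
      simp only [mem_union] at this
      have := hM x hx
      tauto
  choose y M z hy hz hM hMX hinf using key
  exact ⟨{
    src := y
    dst := z
    inner := M
    src_mem := hy
    dst_mem := hz
    inner_ne_nil := hM
    mem_of_mem_inner := hMX
    isChain := fun i => (p i).isChain_adj_support.infix (hinf i)
    disjoint := fun i j hij x hxi hxj =>
      hdis i j hij x ((hinf i).subset hxi) ((hinf j).subset hxj) }⟩

end HasDisjointPaths

section

open Finset

variable {V : Type} [Fintype V] [DecidableEq V]

structure RedPathConfig (G : SimpleGraph V) (t : ℕ) (P : Finpartition (univ : Finset V)) where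
  W₀ : Finset V
  W₁ : Finset V
  W₂ : Finset V
  W₃ : Finset V
  S₁ : Finset V
  S₂ : Finset V
  k : ℕ
  mem₀ : W₀ ∈ P.parts
  mem₁ : W₁ ∈ P.parts
  mem₂ : W₂ ∈ P.parts
  mem₃ : W₃ ∈ P.parts
  red₀₁ : RedEdge G W₀ W₁
  red₁₂ : RedEdge G W₁ W₂
  red₂₃ : RedEdge G W₂ W₃
  noConn₀₂ : NoConn G W₀ W₂
  noConn₀₃ : NoConn G W₀ W₃
  noConn₁₃ : NoConn G W₁ W₃
  fullyConn_S₁ : FullyConn G S₁ W₁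
  fullyConn_S₂ : FullyConn G S₂ W₂
  disjoint_S₁ : Disjoint S₁ (W₀ ∪ W₁ ∪ W₂ ∪ W₃)
  disjoint_S₂ : Disjoint S₂ (W₀ ∪ W₁ ∪ W₂ ∪ W₃)
  card_S₁_lt : #S₁ < t
  card_S₂_lt : #S₂ < t
  potential : 3 * t ≤ k + #S₁ + #S₂ + 2
  linkage : Linkage G W₀ W₁ W₂ W₃ k

namespace RedPathConfig

variable {G : SimpleGraph V} {t : ℕ} {P P' : Finpartition (univ : Finset V)}
  (c : RedPathConfig G t P)

def ofLinkage (ht : 0 < t) {W₀ W₁ W₂ W₃ : Finset V} (h₀ : W₀ ∈ P.parts) (h₁ : W₁ ∈ P.parts)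
    (h₂ : W₂ ∈ P.parts) (h₃ : W₃ ∈ P.parts) (hr₀₁ : RedEdge G W₀ W₁) (hr₁₂ : RedEdge G W₁ W₂)
    (hr₂₃ : RedEdge G W₂ W₃) (hN₀₂ : NoConn G W₀ W₂) (hN₀₃ : NoConn G W₀ W₃)
    (hN₁₃ : NoConn G W₁ W₃) (L : Linkage G W₀ W₁ W₂ W₃ (3 * t - 2)) : RedPathConfig G t P where
  W₀ := W₀
  W₁ := W₁
  W₂ := W₂
  W₃ := W₃
  S₁ := ∅
  S₂ := ∅
  k := 3 * t - 2
  mem₀ := h₀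
  mem₁ := h₁
  mem₂ := h₂
  mem₃ := h₃
  red₀₁ := hr₀₁
  red₁₂ := hr₁₂
  red₂₃ := hr₂₃
  noConn₀₂ := hN₀₂
  noConn₀₃ := hN₀₃
  noConn₁₃ := hN₁₃
  fullyConn_S₁ := fun _ h => absurd h (notMem_empty _)
  fullyConn_S₂ := fun _ h => absurd h (notMem_empty _)
  disjoint_S₁ := disjoint_empty_left _
  disjoint_S₂ := disjoint_empty_left _
  card_S₁_lt := by simpa
  card_S₂_lt := by simpa
  potential := by simp only [card_empty]; omega
  linkage := L

theorem t_le_k : t ≤ c.k := by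
  have := c.card_S₁_lt
  have := c.card_S₂_lt
  have := c.potential
  omega

theorem ne₀₂ : c.W₀ ≠ c.W₂ := fun h => c.red₂₃.2.2 (h ▸ c.noConn₀₃)

theorem ne₀₃ : c.W₀ ≠ c.W₃ := fun h => c.red₀₁.2.2 (h ▸ c.noConn₁₃.symm)

theorem ne₁₃ : c.W₁ ≠ c.W₃ := fun h => c.red₀₁.2.2 (h ▸ c.noConn₀₃)

theorem disjoint₀₁ : Disjoint c.W₀ c.W₁ := P.disjoint c.mem₀ c.mem₁ c.red₀₁.1

theorem disjoint₀₂ : Disjoint c.W₀ c.W₂ := P.disjoint c.mem₀ c.mem₂ c.ne₀₂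

theorem disjoint₀₃ : Disjoint c.W₀ c.W₃ := P.disjoint c.mem₀ c.mem₃ c.ne₀₃

theorem disjoint₁₂ : Disjoint c.W₁ c.W₂ := P.disjoint c.mem₁ c.mem₂ c.red₁₂.1

theorem disjoint₁₃ : Disjoint c.W₁ c.W₃ := P.disjoint c.mem₁ c.mem₃ c.ne₁₃

theorem k_pos : 0 < c.k := by
  have := c.card_S₁_lt
  have := c.t_le_k
  omega

def reverse : RedPathConfig G t P where
  W₀ := c.W₃
  W₁ := c.W₂
  W₂ := c.W₁
  W₃ := c.W₀
  S₁ := c.S₂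
  S₂ := c.S₁
  k := c.k
  mem₀ := c.mem₃
  mem₁ := c.mem₂
  mem₂ := c.mem₁
  mem₃ := c.mem₀
  red₀₁ := c.red₂₃.symm
  red₁₂ := c.red₁₂.symm
  red₂₃ := c.red₀₁.symm
  noConn₀₂ := c.noConn₁₃.symm
  noConn₀₃ := c.noConn₀₃.symm
  noConn₁₃ := c.noConn₀₂.symm
  fullyConn_S₁ := c.fullyConn_S₂
  fullyConn_S₂ := c.fullyConn_S₁
  disjoint_S₁ := by
    rw [show c.W₃ ∪ c.W₂ ∪ c.W₁ ∪ c.W₀ = c.W₀ ∪ c.W₁ ∪ c.W₂ ∪ c.W₃ by ac_rfl]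
    exact c.disjoint_S₂
  disjoint_S₂ := by
    rw [show c.W₃ ∪ c.W₂ ∪ c.W₁ ∪ c.W₀ = c.W₀ ∪ c.W₁ ∪ c.W₂ ∪ c.W₃ by ac_rfl]
    exact c.disjoint_S₁
  card_S₁_lt := c.card_S₂_lt
  card_S₂_lt := c.card_S₁_lt
  potential := by have := c.potential; omega
  linkage := c.linkage.reverse

def transfer (h₀ : c.W₀ ∈ P'.parts) (h₁ : c.W₁ ∈ P'.parts) (h₂ : c.W₂ ∈ P'.parts)
    (h₃ : c.W₃ ∈ P'.parts) : RedPathConfig G t P' :=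
  { c with mem₀ := h₀, mem₁ := h₁, mem₂ := h₂, mem₃ := h₃ }

theorem isEmpty_of_parts_eq_singletons
    (hP : P.parts = univ.image fun v => ({v} : Finset V)) : IsEmpty (RedPathConfig G t P) := by
  refine ⟨fun c => ?_⟩
  have h₀ := c.mem₀
  have h₁ := c.mem₁
  rw [hP] at h₀ h₁
  obtain ⟨a, -, ha⟩ := mem_image.1 h₀
  obtain ⟨b, -, hb⟩ := mem_image.1 h₁
  exact not_redEdge_singleton a b (ha ▸ hb ▸ c.red₀₁)

variable {A B : Finset V}

theorem eq_src_of_mem_W₀ {i : Fin c.k} {x : V} (hx : x ∈ c.linkage.path i) (h₀ : x ∈ c.W₀) :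
    x = c.linkage.src i := by
  simp only [Linkage.path, List.mem_cons, List.mem_append, List.not_mem_nil, or_false] at hx
  rcases hx with rfl | hx | rfl
  · rfl
  · rcases c.linkage.mem_of_mem_inner i x hx with h | h
    exacts [(disjoint_left.1 c.disjoint₀₁ h₀ h).elim, (disjoint_left.1 c.disjoint₀₂ h₀ h).elim]
  · exact (disjoint_left.1 c.disjoint₀₃ h₀ (c.linkage.dst_mem i)).elim

theorem src_notMem_of_noConn (hB : NoConn G B c.W₁) (i : Fin c.k) : c.linkage.src i ∉ B :=
  fun h => hB _ h _ (c.linkage.first_mem c.noConn₀₂ i) (c.linkage.adj_src_first i)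

theorem notMem_path_of_noConn (hW₁ : c.W₁ = A ∪ B) (hBA : NoConn G B A)
    (hB₂ : NoConn G B c.W₂) (i : Fin c.k) : ∀ x ∈ c.linkage.path i, x ∉ B := by
  have hBW₁ : B ⊆ c.W₁ := hW₁ ▸ subset_union_right
  intro x hx hxB
  have hx' := c.linkage.mem_inner_of_mem_path hx (disjoint_right.1 c.disjoint₀₁ (hBW₁ hxB))
    (disjoint_left.1 c.disjoint₁₃ (hBW₁ hxB))
  obtain ⟨b, hb, M, hM, hsuf⟩ := c.linkage.exists_last_mem_inner i ⟨x, hx', hxB⟩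
  have hchain := (c.linkage.isChain_path i).suffix hsuf
  -- the successor of the last vertex of `B` on the path lies in `A`, `W₂` or `W₃`
  cases M with
  | nil =>
    exact c.noConn₁₃ _ (hBW₁ hb) _ (c.linkage.dst_mem i)
      (List.isChain_pair.1 (by simpa using hchain))
  | cons y M =>
    obtain ⟨hy, hyB⟩ := hM y List.mem_cons_self
    have hby : G.Adj b y := (List.isChain_cons_cons.1 (by simpa using hchain)).1
    rcases c.linkage.mem_of_mem_inner i y hy with h | h
    · rw [hW₁] at h
      exact hBA _ hb _ ((mem_union.1 h).resolve_right hyB) hby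
    · exact hB₂ _ hb _ h hby

theorem hasKtt_of_fullyConn_of_noConn_W₁ (hW₀ : c.W₀ = A ∪ B) (hA : FullyConn G A c.W₁)
    (hB : NoConn G B c.W₁) : HasKtt G t := by
  have hsrc (i : Fin c.k) : c.linkage.src i ∈ A :=
    (mem_union.1 (hW₀ ▸ c.linkage.src_mem i)).resolve_right (c.src_notMem_of_noConn hB i)
  exact hasKtt_of_fullyConn hA (c.disjoint₀₁.mono_left (hW₀ ▸ subset_union_left))
    (c.t_le_k.trans (c.linkage.le_card_of_mem_path _ c.linkage.src_mem_path hsrc))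
    (c.t_le_k.trans (c.linkage.le_card_W₁ c.noConn₀₂))

theorem first_mem_of_noConn_W₀ (hW₁ : c.W₁ = A ∪ B) (hA : NoConn G A c.W₀) (i : Fin c.k) :
    c.linkage.first i ∈ B :=
  (mem_union.1 (hW₁ ▸ c.linkage.first_mem c.noConn₀₂ i)).resolve_left
    fun hA' => hA _ hA' _ (c.linkage.src_mem i) (c.linkage.adj_src_first i).symm

theorem k_le_card_of_noConn_W₂ (hW₁ : c.W₁ = A ∪ B) (hB : NoConn G B c.W₂) : c.k ≤ #A := by
  choose y hy hy₁ z hz hyz using c.linkage.exists_adj_of_noConn c.noConn₀₂ c.noConn₁₃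
  refine c.linkage.le_card_of_mem_path y (fun i => c.linkage.mem_path_of_mem_inner (hy i))
    fun i => ?_
  have h := hy₁ i
  rw [hW₁] at h
  exact (mem_union.1 h).resolve_right fun hB' => hB _ hB' _ (hz i) (hyz i)

theorem hasKtt_of_fullyConn_of_noConn_W₂ (hW₁ : c.W₁ = A ∪ B) (hA : FullyConn G A c.W₂)
    (hB : NoConn G B c.W₂) : HasKtt G t :=
  hasKtt_of_fullyConn hA (c.disjoint₁₂.mono_left (hW₁ ▸ subset_union_left))
    (c.t_le_k.trans (c.k_le_card_of_noConn_W₂ hW₁ hB))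
    (c.t_le_k.trans (c.linkage.le_card_W₂ c.noConn₁₃))

def restrict (B : Finset V) {W₀ W₁ S₁ S₂ : Finset V} (h₀ : W₀ ∈ P'.parts)
    (h₁ : W₁ ∈ P'.parts) (h₂ : c.W₂ ∈ P'.parts) (h₃ : c.W₃ ∈ P'.parts) (hW₀ : W₀ ⊆ c.W₀)
    (hW₁ : W₁ ⊆ c.W₁) (hcov₀ : c.W₀ ⊆ W₀ ∪ B) (hcov₁ : c.W₁ ⊆ W₁ ∪ B)
    (hr₀₁ : RedEdge G W₀ W₁) (hr₁₂ : RedEdge G W₁ c.W₂)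
    (hS₁ : FullyConn G S₁ W₁) (hS₂ : FullyConn G S₂ c.W₂)
    (hdS₁ : Disjoint S₁ (W₀ ∪ W₁ ∪ c.W₂ ∪ c.W₃)) (hdS₂ : Disjoint S₂ (W₀ ∪ W₁ ∪ c.W₂ ∪ c.W₃))
    (hcS₁ : #S₁ < t) (hcS₂ : #S₂ < t)
    (hpot : c.k + #c.S₁ + #c.S₂ ≤ #(c.linkage.avoiders B) + #S₁ + #S₂) : RedPathConfig G t P' where
  W₀ := W₀
  W₁ := W₁
  W₂ := c.W₂
  W₃ := c.W₃
  S₁ := S₁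
  S₂ := S₂
  k := #(c.linkage.avoiders B)
  mem₀ := h₀
  mem₁ := h₁
  mem₂ := h₂
  mem₃ := h₃
  red₀₁ := hr₀₁
  red₁₂ := hr₁₂
  red₂₃ := c.red₂₃
  noConn₀₂ := c.noConn₀₂.mono hW₀ subset_rfl
  noConn₀₃ := c.noConn₀₃.mono hW₀ subset_rfl
  noConn₁₃ := c.noConn₁₃.mono hW₁ subset_rfl
  fullyConn_S₁ := hS₁
  fullyConn_S₂ := hS₂
  disjoint_S₁ := hdS₁
  disjoint_S₂ := hdS₂
  card_S₁_lt := hcS₁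
  card_S₂_lt := hcS₂
  potential := by have := c.potential; omega
  linkage := c.linkage.avoid B hcov₀ hcov₁

def truncate (hA : A ∈ P'.parts) (hB : B ∈ P'.parts) (hW₁ : c.W₁ = A ∪ B)
    (h₂ : c.W₂ ∈ P'.parts) (h₃ : c.W₃ ∈ P'.parts) (hBA : RedEdge G B A)
    (hA₂ : RedEdge G A c.W₂) (hB₂ : NoConn G B c.W₂) (T : Linkage G B A c.W₂ c.W₃ c.k) :
    RedPathConfig G t P' :=
  have hAW₁ : A ⊆ c.W₁ := hW₁ ▸ subset_union_left
  have hBW₁ : B ⊆ c.W₁ := hW₁ ▸ subset_union_right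
  have hsupp : B ∪ A ∪ c.W₂ ∪ c.W₃ ⊆ c.W₀ ∪ c.W₁ ∪ c.W₂ ∪ c.W₃ :=
    union_subset_union (union_subset_union (union_subset (hBW₁.trans subset_union_right)
      (hAW₁.trans subset_union_right)) subset_rfl) subset_rfl
  { W₀ := B
    W₁ := A
    W₂ := c.W₂
    W₃ := c.W₃
    S₁ := c.S₁
    S₂ := c.S₂
    k := c.k
    mem₀ := hB
    mem₁ := hA
    mem₂ := h₂
    mem₃ := h₃
    red₀₁ := hBA
    red₁₂ := hA₂
    red₂₃ := c.red₂₃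
    noConn₀₂ := hB₂
    noConn₀₃ := c.noConn₁₃.mono hBW₁ subset_rfl
    noConn₁₃ := c.noConn₁₃.mono hAW₁ subset_rfl
    fullyConn_S₁ := c.fullyConn_S₁.mono subset_rfl hAW₁
    fullyConn_S₂ := c.fullyConn_S₂
    disjoint_S₁ := c.disjoint_S₁.mono_right hsupp
    disjoint_S₂ := c.disjoint_S₂.mono_right hsupp
    card_S₁_lt := c.card_S₁_lt
    card_S₂_lt := c.card_S₂_lt
    potential := c.potential
    linkage := T }

theorem unmerge_W₀_of_redEdge (hA : A ∈ P'.parts) (hB : B ∈ P'.parts) (hAB : A ≠ B)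
    (hW₀ : c.W₀ = A ∪ B) (h₁ : c.W₁ ∈ P'.parts) (h₂ : c.W₂ ∈ P'.parts) (h₃ : c.W₃ ∈ P'.parts)
    (hA₁ : RedEdge G A c.W₁) (hB₁ : ¬ RedEdge G B c.W₁) :
    HasKtt G t ∨ Nonempty (RedPathConfig G t P') := by
  have hAW₀ : A ⊆ c.W₀ := hW₀ ▸ subset_union_left
  have hBW₀ : B ⊆ c.W₀ := hW₀ ▸ subset_union_right
  have hsupp : A ∪ c.W₁ ∪ c.W₂ ∪ c.W₃ ⊆ c.W₀ ∪ c.W₁ ∪ c.W₂ ∪ c.W₃ := by gcongr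
  have hdB₁ : Disjoint B c.W₁ := c.disjoint₀₁.mono_left hBW₀
  have hdB : Disjoint B (A ∪ c.W₁ ∪ c.W₂ ∪ c.W₃) := by
    simp only [disjoint_union_right]
    exact ⟨⟨⟨(P'.disjoint hA hB hAB).symm, hdB₁⟩, c.disjoint₀₂.mono_left hBW₀⟩,
      c.disjoint₀₃.mono_left hBW₀⟩
  rcases fullyConn_or_noConn_of_not_redEdge (hdB₁.ne (P'.ne_bot hB)) hB₁ with hF | hN
  · by_cases hfire : t ≤ #(c.S₁ ∪ B)
    · exact .inl (hasKtt_of_fullyConn (c.fullyConn_S₁.union_left hF)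
        (disjoint_union_left.2 ⟨c.disjoint_S₁.mono_right fun x hx => by simp [hx], hdB₁⟩) hfire
        (c.t_le_k.trans (c.linkage.le_card_W₁ c.noConn₀₂)))
    have := c.linkage.le_card_avoiders_add_card B
    have : #(c.S₁ ∪ B) = #c.S₁ + #B :=
      card_union_of_disjoint (c.disjoint_S₁.mono_right fun x hx => by simp [hBW₀ hx])
    exact .inr ⟨c.restrict B hA h₁ h₂ h₃ hAW₀ subset_rfl hW₀.subset subset_union_left hA₁
      c.red₁₂ (c.fullyConn_S₁.union_left hF) c.fullyConn_S₂
      (disjoint_union_left.2 ⟨c.disjoint_S₁.mono_right hsupp, hdB⟩)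
      (c.disjoint_S₂.mono_right hsupp) (not_le.1 hfire) c.card_S₂_lt (by omega)⟩
  · have := c.linkage.card_avoiders_of_forall fun i x hx hxB =>
      c.src_notMem_of_noConn hN i (c.eq_src_of_mem_W₀ hx (hBW₀ hxB) ▸ hxB)
    exact .inr ⟨c.restrict B hA h₁ h₂ h₃ hAW₀ subset_rfl hW₀.subset subset_union_left hA₁
      c.red₁₂ c.fullyConn_S₁ c.fullyConn_S₂ (c.disjoint_S₁.mono_right hsupp)
      (c.disjoint_S₂.mono_right hsupp) c.card_S₁_lt c.card_S₂_lt (by omega)⟩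

theorem unmerge_W₀ (hA : A ∈ P'.parts) (hB : B ∈ P'.parts) (hAB : A ≠ B)
    (hW₀ : c.W₀ = A ∪ B) (h₁ : c.W₁ ∈ P'.parts) (h₂ : c.W₂ ∈ P'.parts) (h₃ : c.W₃ ∈ P'.parts)
    (hw : ∀ Q ∈ P'.parts, redDegree G P'.parts Q ≤ 2) :
    HasKtt G t ∨ Nonempty (RedPathConfig G t P') := by
  have hAW₀ : A ⊆ c.W₀ := hW₀ ▸ subset_union_left
  have hBW₀ : B ⊆ c.W₀ := hW₀ ▸ subset_union_right
  by_cases hrA : RedEdge G A c.W₁ <;> by_cases hrB : RedEdge G B c.W₁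
  · exact absurd hrB.symm (not_redEdge_of_redDegree_le_two (hw _ h₁) h₂ hA hB
      ((c.disjoint₀₂.mono_left hAW₀).ne (P'.ne_bot hA)).symm
      ((c.disjoint₀₂.mono_left hBW₀).ne (P'.ne_bot hB)).symm hAB c.red₁₂ hrA.symm)
  · exact c.unmerge_W₀_of_redEdge hA hB hAB hW₀ h₁ h₂ h₃ hrA hrB
  · exact c.unmerge_W₀_of_redEdge hB hA hAB.symm (hW₀.trans (union_comm _ _)) h₁ h₂ h₃ hrB hrA
  · left
    rcases fullyConn_and_noConn_or_of_redEdge_union (hW₀ ▸ c.red₀₁)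
      ((c.disjoint₀₁.mono_left hAW₀).ne (P'.ne_bot hA))
      ((c.disjoint₀₁.mono_left hBW₀).ne (P'.ne_bot hB)) hrA hrB with ⟨hF, hN⟩ | ⟨hN, hF⟩
    · exact c.hasKtt_of_fullyConn_of_noConn_W₁ hW₀ hF hN
    · exact c.hasKtt_of_fullyConn_of_noConn_W₁ (hW₀.trans (union_comm _ _)) hF hN

theorem unmerge_W₁_of_fullyConn (hA : A ∈ P'.parts) (hB : B ∈ P'.parts) (hAB : A ≠ B)
    (hW₁ : c.W₁ = A ∪ B) (h₀ : c.W₀ ∈ P'.parts) (h₂ : c.W₂ ∈ P'.parts) (h₃ : c.W₃ ∈ P'.parts)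
    (hA₂ : RedEdge G A c.W₂) (hB₂ : FullyConn G B c.W₂) :
    HasKtt G t ∨ Nonempty (RedPathConfig G t P') := by
  have hAW₁ : A ⊆ c.W₁ := hW₁ ▸ subset_union_left
  have hBW₁ : B ⊆ c.W₁ := hW₁ ▸ subset_union_right
  have hdA₀ : Disjoint A c.W₀ := c.disjoint₀₁.symm.mono_left hAW₁
  have hdB₂ : Disjoint B c.W₂ := c.disjoint₁₂.mono_left hBW₁
  by_cases hfire : t ≤ #(c.S₂ ∪ B)
  · exact .inl (hasKtt_of_fullyConn (c.fullyConn_S₂.union_left hB₂)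
      (disjoint_union_left.2 ⟨c.disjoint_S₂.mono_right fun x hx => by simp [hx], hdB₂⟩) hfire
      (c.t_le_k.trans (c.linkage.le_card_W₂ c.noConn₁₃)))
  have hcard : #(c.S₂ ∪ B) = #c.S₂ + #B :=
    card_union_of_disjoint (c.disjoint_S₂.mono_right fun x hx => by simp [hBW₁ hx])
  have hk := c.linkage.le_card_avoiders_add_card B
  by_cases hrA₀ : RedEdge G A c.W₀
  · have hsupp : c.W₀ ∪ A ∪ c.W₂ ∪ c.W₃ ⊆ c.W₀ ∪ c.W₁ ∪ c.W₂ ∪ c.W₃ := by gcongr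
    have hdB : Disjoint B (c.W₀ ∪ A ∪ c.W₂ ∪ c.W₃) := by
      simp only [disjoint_union_right]
      exact ⟨⟨⟨c.disjoint₀₁.symm.mono_left hBW₁, (P'.disjoint hA hB hAB).symm⟩, hdB₂⟩,
        c.disjoint₁₃.mono_left hBW₁⟩
    exact .inr ⟨c.restrict B h₀ hA h₂ h₃ subset_rfl hAW₁ subset_union_left hW₁.subset
      hrA₀.symm hA₂ (c.fullyConn_S₁.mono subset_rfl hAW₁) (c.fullyConn_S₂.union_left hB₂)
      (c.disjoint_S₁.mono_right hsupp) (disjoint_union_left.2 ⟨c.disjoint_S₂.mono_right hsupp, hdB⟩)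
      c.card_S₁_lt (not_le.1 hfire) (by omega)⟩
  rcases fullyConn_or_noConn_of_not_redEdge (hdA₀.ne (P'.ne_bot hA)) hrA₀ with hF | hN
  · by_cases hAt : t ≤ #A
    · exact .inl (hasKtt_of_fullyConn hF hdA₀ hAt (c.t_le_k.trans c.linkage.le_card_W₀))
    -- the paths avoiding `B` enter `W₁` through `A`, so too few paths remain for the potential
    have hfirst (i : Fin c.k) (hi : i ∈ c.linkage.avoiders B) : c.linkage.first i ∈ A :=
      (mem_union.1 (hW₁ ▸ c.linkage.first_mem c.noConn₀₂ i)).resolve_right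
        (c.linkage.mem_avoiders.1 hi _ (c.linkage.first_mem_path i))
    have := c.linkage.card_le_card_of_mem_path _ c.linkage.first
      (fun i _ => c.linkage.first_mem_path i) hfirst
    have := c.potential
    have := c.card_S₁_lt
    omega
  · exact .inl (hasKtt_of_fullyConn hB₂ hdB₂ (c.t_le_k.trans (c.linkage.le_card_of_mem_path _
      c.linkage.first_mem_path (c.first_mem_of_noConn_W₀ hW₁ hN)))
      (c.t_le_k.trans (c.linkage.le_card_W₂ c.noConn₁₃)))

theorem unmerge_W₁_of_noConn_of_redEdge (hA : A ∈ P'.parts) (hB : B ∈ P'.parts) (hAB : A ≠ B)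
    (hW₁ : c.W₁ = A ∪ B) (h₀ : c.W₀ ∈ P'.parts) (h₂ : c.W₂ ∈ P'.parts) (h₃ : c.W₃ ∈ P'.parts)
    (hw : redDegree G P'.parts A ≤ 2) (hA₂ : RedEdge G A c.W₂) (hB₂ : NoConn G B c.W₂)
    (hA₀ : RedEdge G A c.W₀) : HasKtt G t ∨ Nonempty (RedPathConfig G t P') := by
  have hAW₁ : A ⊆ c.W₁ := hW₁ ▸ subset_union_left
  have hBW₁ : B ⊆ c.W₁ := hW₁ ▸ subset_union_right
  have hdAB : Disjoint A B := P'.disjoint hA hB hAB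
  have hsupp : c.W₀ ∪ A ∪ c.W₂ ∪ c.W₃ ⊆ c.W₀ ∪ c.W₁ ∪ c.W₂ ∪ c.W₃ := by gcongr
  have hS₁ : FullyConn G c.S₁ A := c.fullyConn_S₁.mono subset_rfl hAW₁
  by_cases hrAB : RedEdge G A B
  · exact absurd hrAB (not_redEdge_of_redDegree_le_two hw h₀ h₂ hB c.ne₀₂
      ((c.disjoint₀₁.mono_right hBW₁).ne (P'.ne_bot h₀))
      ((c.disjoint₁₂.mono_left hBW₁).ne (P'.ne_bot hB)).symm hA₀ hA₂)
  rcases fullyConn_or_noConn_of_not_redEdge hAB hrAB with hF | hN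
  · by_cases hfire : t ≤ #(c.S₁ ∪ B)
    · exact .inl (hasKtt_of_fullyConn (hS₁.union_left hF.symm)
        (disjoint_union_left.2 ⟨c.disjoint_S₁.mono_right (hAW₁.trans fun x hx => by simp [hx]),
          hdAB.symm⟩) hfire (c.t_le_k.trans (c.k_le_card_of_noConn_W₂ hW₁ hB₂)))
    have hdB : Disjoint B (c.W₀ ∪ A ∪ c.W₂ ∪ c.W₃) := by
      simp only [disjoint_union_right]
      exact ⟨⟨⟨c.disjoint₀₁.symm.mono_left hBW₁, hdAB.symm⟩, c.disjoint₁₂.mono_left hBW₁⟩,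
        c.disjoint₁₃.mono_left hBW₁⟩
    have : #(c.S₁ ∪ B) = #c.S₁ + #B :=
      card_union_of_disjoint (c.disjoint_S₁.mono_right fun x hx => by simp [hBW₁ hx])
    have := c.linkage.le_card_avoiders_add_card B
    exact .inr ⟨c.restrict B h₀ hA h₂ h₃ subset_rfl hAW₁ subset_union_left hW₁.subset
      hA₀.symm hA₂ (hS₁.union_left hF.symm) c.fullyConn_S₂
      (disjoint_union_left.2 ⟨c.disjoint_S₁.mono_right hsupp, hdB⟩)
      (c.disjoint_S₂.mono_right hsupp) (not_le.1 hfire) c.card_S₂_lt (by omega)⟩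
  · have := c.linkage.card_avoiders_of_forall (c.notMem_path_of_noConn hW₁ hN.symm hB₂)
    exact .inr ⟨c.restrict B h₀ hA h₂ h₃ subset_rfl hAW₁ subset_union_left hW₁.subset
      hA₀.symm hA₂ hS₁ c.fullyConn_S₂ (c.disjoint_S₁.mono_right hsupp)
      (c.disjoint_S₂.mono_right hsupp) c.card_S₁_lt c.card_S₂_lt (by omega)⟩

theorem unmerge_W₁_of_noConn_of_noConn (hA : A ∈ P'.parts) (hB : B ∈ P'.parts) (hAB : A ≠ B)
    (hW₁ : c.W₁ = A ∪ B) (h₂ : c.W₂ ∈ P'.parts) (h₃ : c.W₃ ∈ P'.parts)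
    (hA₂ : RedEdge G A c.W₂) (hB₂ : NoConn G B c.W₂) (hA₀ : NoConn G A c.W₀) :
    HasKtt G t ∨ Nonempty (RedPathConfig G t P') := by
  have hBW₁ : B ⊆ c.W₁ := hW₁ ▸ subset_union_right
  have hdB₀ : Disjoint B c.W₀ := c.disjoint₀₁.symm.mono_left hBW₁
  have hfirst := c.first_mem_of_noConn_W₀ hW₁ hA₀
  have htB : t ≤ #B := c.t_le_k.trans (c.linkage.le_card_of_mem_path _
    c.linkage.first_mem_path hfirst)
  have htA : t ≤ #A := c.t_le_k.trans (c.k_le_card_of_noConn_W₂ hW₁ hB₂)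
  by_cases hrB₀ : RedEdge G B c.W₀
  swap
  · rcases fullyConn_or_noConn_of_not_redEdge (hdB₀.ne (P'.ne_bot hB)) hrB₀ with hF | hN
    · exact .inl (hasKtt_of_fullyConn hF hdB₀ htB (c.t_le_k.trans c.linkage.le_card_W₀))
    · exact absurd (hW₁ ▸ (hA₀.union_left hN).symm) c.red₀₁.2.2
  obtain ⟨T⟩ := c.linkage.nonempty_truncate (fun i => ⟨_, c.linkage.first_mem_inner i, hfirst i⟩)
    hW₁.subset (c.noConn₁₃.mono hBW₁ subset_rfl)
  by_cases hrAB : RedEdge G A B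
  · exact .inr ⟨c.truncate hA hB hW₁ h₂ h₃ hrAB.symm hA₂ hB₂ T⟩
  rcases fullyConn_or_noConn_of_not_redEdge hAB hrAB with hF | hN
  · exact .inl (hasKtt_of_fullyConn hF (P'.disjoint hA hB hAB) htA htB)
  · -- a truncated path would leave `B` through an edge into `A ∪ W₂`
    let i : Fin c.k := ⟨0, c.k_pos⟩
    rcases T.mem_of_mem_inner i _ (T.first_mem_inner i) with h | h
    · exact (hN _ h _ (T.src_mem i) (T.adj_src_first i).symm).elim
    · exact (hB₂ _ (T.src_mem i) _ h (T.adj_src_first i)).elim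

theorem unmerge_W₁_of_redEdge (hA : A ∈ P'.parts) (hB : B ∈ P'.parts) (hAB : A ≠ B)
    (hW₁ : c.W₁ = A ∪ B) (h₀ : c.W₀ ∈ P'.parts) (h₂ : c.W₂ ∈ P'.parts) (h₃ : c.W₃ ∈ P'.parts)
    (hw : redDegree G P'.parts A ≤ 2) (hA₂ : RedEdge G A c.W₂) (hB₂ : ¬ RedEdge G B c.W₂) :
    HasKtt G t ∨ Nonempty (RedPathConfig G t P') := by
  have hdA₀ : Disjoint A c.W₀ := c.disjoint₀₁.symm.mono_left (hW₁ ▸ subset_union_left)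
  have hdB₂ : Disjoint B c.W₂ := c.disjoint₁₂.mono_left (hW₁ ▸ subset_union_right)
  rcases fullyConn_or_noConn_of_not_redEdge (hdB₂.ne (P'.ne_bot hB)) hB₂ with hF | hN
  · exact c.unmerge_W₁_of_fullyConn hA hB hAB hW₁ h₀ h₂ h₃ hA₂ hF
  by_cases hA₀ : RedEdge G A c.W₀
  · exact c.unmerge_W₁_of_noConn_of_redEdge hA hB hAB hW₁ h₀ h₂ h₃ hw hA₂ hN hA₀
  rcases fullyConn_or_noConn_of_not_redEdge (hdA₀.ne (P'.ne_bot hA)) hA₀ with hF | hN₀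
  · exact .inl (hasKtt_of_fullyConn hF hdA₀ (c.t_le_k.trans (c.k_le_card_of_noConn_W₂ hW₁ hN))
      (c.t_le_k.trans c.linkage.le_card_W₀))
  · exact c.unmerge_W₁_of_noConn_of_noConn hA hB hAB hW₁ h₂ h₃ hA₂ hN hN₀

theorem unmerge_W₁ (hA : A ∈ P'.parts) (hB : B ∈ P'.parts) (hAB : A ≠ B)
    (hW₁ : c.W₁ = A ∪ B) (h₀ : c.W₀ ∈ P'.parts) (h₂ : c.W₂ ∈ P'.parts) (h₃ : c.W₃ ∈ P'.parts)
    (hw : ∀ Q ∈ P'.parts, redDegree G P'.parts Q ≤ 2) :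
    HasKtt G t ∨ Nonempty (RedPathConfig G t P') := by
  have hAW₁ : A ⊆ c.W₁ := hW₁ ▸ subset_union_left
  have hBW₁ : B ⊆ c.W₁ := hW₁ ▸ subset_union_right
  by_cases hrA : RedEdge G A c.W₂ <;> by_cases hrB : RedEdge G B c.W₂
  · exact absurd hrB.symm (not_redEdge_of_redDegree_le_two (hw _ h₂) h₃ hA hB
      ((c.disjoint₁₃.mono_left hAW₁).ne (P'.ne_bot hA)).symm
      ((c.disjoint₁₃.mono_left hBW₁).ne (P'.ne_bot hB)).symm hAB c.red₂₃ hrA.symm)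
  · exact c.unmerge_W₁_of_redEdge hA hB hAB hW₁ h₀ h₂ h₃ (hw A hA) hrA hrB
  · exact c.unmerge_W₁_of_redEdge hB hA hAB.symm (hW₁.trans (union_comm _ _)) h₀ h₂ h₃ (hw B hB)
      hrB hrA
  · left
    rcases fullyConn_and_noConn_or_of_redEdge_union (hW₁ ▸ c.red₁₂)
      ((c.disjoint₁₂.mono_left hAW₁).ne (P'.ne_bot hA))
      ((c.disjoint₁₂.mono_left hBW₁).ne (P'.ne_bot hB)) hrA hrB with ⟨hF, hN⟩ | ⟨hN, hF⟩
    · exact c.hasKtt_of_fullyConn_of_noConn_W₂ hW₁ hF hN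
    · exact c.hasKtt_of_fullyConn_of_noConn_W₂ (hW₁.trans (union_comm _ _)) hF hN

theorem unmerge (c : RedPathConfig G t P) (hP : IsMergeOf P'.parts P.parts)
    (hw : ∀ Q ∈ P'.parts, redDegree G P'.parts Q ≤ 2) :
    HasKtt G t ∨ Nonempty (RedPathConfig G t P') := by
  obtain ⟨A, hA, B, hB, hAB, hP⟩ := hP
  have mem {W : Finset V} (hW : W ∈ P.parts) (hne : W ≠ A ∪ B) : W ∈ P'.parts := by
    rw [hP, mem_union, mem_singleton] at hW
    exact (mem_sdiff.1 (hW.resolve_right hne)).1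
  by_cases h₀ : c.W₀ = A ∪ B
  · exact c.unmerge_W₀ hA hB hAB h₀ (mem c.mem₁ fun h => c.red₀₁.1 (h₀.trans h.symm))
      (mem c.mem₂ fun h => c.ne₀₂ (h₀.trans h.symm))
      (mem c.mem₃ fun h => c.ne₀₃ (h₀.trans h.symm)) hw
  by_cases h₃ : c.W₃ = A ∪ B
  · exact c.reverse.unmerge_W₀ hA hB hAB h₃ (mem c.mem₂ fun h => c.red₂₃.1 (h.trans h₃.symm))
      (mem c.mem₁ fun h => c.ne₁₃ (h.trans h₃.symm)) (mem c.mem₀ h₀) hw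
  by_cases h₁ : c.W₁ = A ∪ B
  · exact c.unmerge_W₁ hA hB hAB h₁ (mem c.mem₀ h₀)
      (mem c.mem₂ fun h => c.red₁₂.1 (h₁.trans h.symm)) (mem c.mem₃ h₃) hw
  by_cases h₂ : c.W₂ = A ∪ B
  · exact c.reverse.unmerge_W₁ hA hB hAB h₂ (mem c.mem₃ h₃) (mem c.mem₁ h₁) (mem c.mem₀ h₀) hw
  exact .inr ⟨c.transfer (mem c.mem₀ h₀) (mem c.mem₁ h₁) (mem c.mem₂ h₂) (mem c.mem₃ h₃)⟩

end RedPathConfig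

end

section

open Finset

variable {V : Type} [Fintype V] [DecidableEq V] {G : SimpleGraph V} {t : ℕ}

theorem hasKtt_or_nonempty_redPathConfig {P : Finpartition (univ : Finset V)} (ht : 0 < t)
    (hw : ∀ Q ∈ P.parts, redDegree G P.parts Q ≤ 2) {X₁ X₂ X₃ X₄ : Finset V}
    (h₁ : X₁ ∈ P.parts) (h₂ : X₂ ∈ P.parts) (h₃ : X₃ ∈ P.parts) (h₄ : X₄ ∈ P.parts)
    (h₁₄ : X₁ ≠ X₄) (hr₁₂ : RedEdge G X₁ X₂) (hr₂₃ : RedEdge G X₂ X₃) (hr₃₄ : RedEdge G X₃ X₄)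
    (hr₁₄ : ¬ RedEdge G X₁ X₄)
    (hpaths : HasDisjointPaths G (X₁ ∪ X₂ ∪ X₃ ∪ X₄) X₁ X₄ (3 * t - 2)) :
    HasKtt G t ∨ Nonempty (RedPathConfig G t P) := by
  have h₁₃ : X₁ ≠ X₃ := fun h => hr₁₄ (h ▸ hr₃₄)
  have h₂₄ : X₂ ≠ X₄ := fun h => hr₁₄ (h ▸ hr₁₂)
  have htk : t ≤ 3 * t - 2 := by omega
  obtain ⟨hX₁, hX₄⟩ := hpaths.le_card
  rcases fullyConn_or_noConn_of_not_redEdge h₁₄ hr₁₄ with hF₁₄ | hN₁₄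
  · exact .inl (hasKtt_of_fullyConn hF₁₄ (P.disjoint h₁ h₄ h₁₄) (htk.trans hX₁) (htk.trans hX₄))
  obtain ⟨L⟩ := hpaths.nonempty_linkage (P.disjoint h₁ h₄ h₁₄) hN₁₄
  have hr₁₃ : ¬ RedEdge G X₁ X₃ := fun h => not_redEdge_of_redDegree_le_two (hw X₃ h₃) h₂ h₄ h₁
    h₂₄ hr₁₂.1.symm h₁₄.symm hr₂₃.symm hr₃₄ h.symm
  have hr₂₄ : ¬ RedEdge G X₂ X₄ := not_redEdge_of_redDegree_le_two (hw X₂ h₂) h₁ h₃ h₄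
    h₁₃ h₁₄ hr₃₄.1 hr₁₂.symm hr₂₃
  rcases fullyConn_or_noConn_of_not_redEdge h₁₃ hr₁₃ with hF₁₃ | hN₁₃ <;>
    rcases fullyConn_or_noConn_of_not_redEdge h₂₄ hr₂₄ with hF₂₄ | hN₂₄
  · have := L.le_card_add_card
    by_cases hX₂ : t ≤ #X₂
    · exact .inl (hasKtt_of_fullyConn hF₂₄ (P.disjoint h₂ h₄ h₂₄) hX₂ (htk.trans hX₄))
    · exact .inl (hasKtt_of_fullyConn hF₁₃ (P.disjoint h₁ h₃ h₁₃) (htk.trans hX₁) (by omega))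
  · exact .inl (hasKtt_of_fullyConn hF₁₃ (P.disjoint h₁ h₃ h₁₃) (htk.trans hX₁)
      (htk.trans (L.le_card_W₂ hN₂₄)))
  · exact .inl (hasKtt_of_fullyConn hF₂₄ (P.disjoint h₂ h₄ h₂₄) (htk.trans (L.le_card_W₁ hN₁₃))
      (htk.trans hX₄))
  · exact .inr ⟨.ofLinkage ht h₁ h₂ h₃ h₄ hr₁₂ hr₂₃ hr₃₄ hN₁₃ hN₁₄ hN₂₄ L⟩

theorem hasKtt_of_nonempty_redPathConfig {Pseq : ℕ → Finpartition (univ : Finset V)}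
    (hseq : IsPartitionSeq Pseq) (hwidth : SeqWidthLE G Pseq 2) {m : ℕ} (hm : 1 ≤ m)
    (hmn : m ≤ Fintype.card V) (h : Nonempty (RedPathConfig G t (Pseq m))) : HasKtt G t := by
  have key (i : ℕ) (hmi : m ≤ i) (hi : i ≤ Fintype.card V) :
      HasKtt G t ∨ Nonempty (RedPathConfig G t (Pseq i)) := by
    induction i, hmi using Nat.le_induction with
    | base => exact .inr h
    | succ i hmi ih =>
      exact (ih (by omega)).elim .inl fun ⟨c⟩ =>
        c.unmerge (hseq.2 i (by omega) (by omega)) (hwidth (i + 1) (by omega) hi)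
  exact (key _ hmn le_rfl).elim id fun ⟨c⟩ =>
    ((RedPathConfig.isEmpty_of_parts_eq_singletons hseq.1).false c).elim

end

theorem highly_connected_red_path_implies_biclique_general {V : Type} [Fintype V] [DecidableEq V]
    (G : SimpleGraph V) (t : ℕ)
    (Pseq : ℕ → Finpartition (Finset.univ : Finset V))
    (hseq : IsPartitionSeq Pseq) (hwidth : SeqWidthLE G Pseq 2)
    (m : ℕ) (hm1 : 1 ≤ m) (hmn : m ≤ Fintype.card V)
    (X₁ X₂ X₃ X₄ : Finset V)
    (h1 : X₁ ∈ (Pseq m).parts) (h2 : X₂ ∈ (Pseq m).parts)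
    (h3 : X₃ ∈ (Pseq m).parts) (h4 : X₄ ∈ (Pseq m).parts)
    (h14 : X₁ ≠ X₄)
    (hr12 : RedEdge G X₁ X₂) (hr23 : RedEdge G X₂ X₃) (hr34 : RedEdge G X₃ X₄)
    (hr14 : ¬ RedEdge G X₁ X₄)
    (hpaths : HasDisjointPaths G (X₁ ∪ X₂ ∪ X₃ ∪ X₄) X₁ X₄ (3 * t - 2)) :
    HasKtt G t := by
  obtain rfl | ht := Nat.eq_zero_or_pos t
  · exact ⟨Fin.elim0, Fin.elim0, fun i => i.elim0, fun i => i.elim0, fun i => i.elim0,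
      fun i => i.elim0⟩
  exact (hasKtt_or_nonempty_redPathConfig ht (hwidth m hm1 hmn) h1 h2 h3 h4 h14 hr12 hr23 hr34
    hr14 hpaths).elim id (hasKtt_of_nonempty_redPathConfig hseq hwidth hm1 hmn)

/-- If in some quotient trigraph of a `2`-partition sequence of `G` there is a red path
`X₁ X₂ X₃ X₄` with no red edge `X₁ X₄` such that `G[X₁∪X₂∪X₃∪X₄]` contains `3t - 2`
pairwise vertex-disjoint `X₁`–`X₄` paths, then `G` contains a semi-induced biclique
`K_{t,t}`. -/
theorem highly_connected_red_path_implies_biclique {V : Type} [Fintype V] [DecidableEq V]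
    (G : SimpleGraph V) (t : ℕ)
    (Pseq : ℕ → Finpartition (Finset.univ : Finset V))
    (hseq : IsPartitionSeq Pseq) (hwidth : SeqWidthLE G Pseq 2)
    (m : ℕ) (hm1 : 1 ≤ m) (hmn : m ≤ Fintype.card V)
    (X₁ X₂ X₃ X₄ : Finset V)
    (h1 : X₁ ∈ (Pseq m).parts) (h2 : X₂ ∈ (Pseq m).parts)
    (h3 : X₃ ∈ (Pseq m).parts) (h4 : X₄ ∈ (Pseq m).parts)
    (h12 : X₁ ≠ X₂) (h13 : X₁ ≠ X₃) (h14 : X₁ ≠ X₄)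
    (h23 : X₂ ≠ X₃) (h24 : X₂ ≠ X₄) (h34 : X₃ ≠ X₄)
    (hr12 : RedEdge G X₁ X₂) (hr23 : RedEdge G X₂ X₃) (hr34 : RedEdge G X₃ X₄)
    (hr14 : ¬ RedEdge G X₁ X₄)
    (hpaths : HasDisjointPaths G (X₁ ∪ X₂ ∪ X₃ ∪ X₄) X₁ X₄ (3 * t - 2)) :
    HasKtt G t :=
  highly_connected_red_path_implies_biclique_general G t Pseq hseq hwidth m hm1 hmn X₁ X₂ X₃ X₄ h1
    h2 h3 h4 h14 hr12 hr23 hr34 hr14 hpaths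
end

section
/- For all graphs G and H and all k ≥ 1, if G ≡_{C_{2k}} H, then G^1 ≡_{C_k} H^1. -/
/-- The edges of `G`, oriented according to the linear order on the vertices. -/
def SubEdges {V : Type} [LinearOrder V] (G : SimpleGraph V) : Type :=
  {p : V × V // p.1 < p.2 ∧ G.Adj p.1 p.2}

/-- The vertex set of the `s`-subdivision of `G`: the original vertices together with
`s` new internal path vertices for each edge. -/
def SubdivVerts {V : Type} [LinearOrder V] (G : SimpleGraph V) (s : ℕ) : Type :=
  V ⊕ (SubEdges G × Fin s)

/-- The `s`-subdivision `G^s` of `G`: every edge of `G` is replaced by a path with `s`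
new internal vertices (for `s = 0` this is `G` itself). -/
def subdivision {V : Type} [LinearOrder V] (G : SimpleGraph V) (s : ℕ) :
    SimpleGraph (SubdivVerts G s) :=
  SimpleGraph.fromRel (fun x y =>
    match x, y with
    | Sum.inl u, Sum.inl v => s = 0 ∧ G.Adj u v
    | Sum.inl u, Sum.inr (e, j) => (u = e.1.1 ∧ (j : ℕ) = 0) ∨ (u = e.1.2 ∧ (j : ℕ) = s - 1)
    | Sum.inr (e, j), Sum.inr (e', j') => e = e' ∧ (j : ℕ) + 1 = (j' : ℕ)
    | Sum.inr _, Sum.inl _ => False)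

/-- Formulas of the `k`-variable fragment of first-order logic with counting quantifiers,
over the language of graphs. `count n i φ` is the counting quantifier `∃^{≥n} x_i φ`. -/
inductive CFormula (k : ℕ) : Type
  | eq : Fin k → Fin k → CFormula k
  | adj : Fin k → Fin k → CFormula k
  | not : CFormula k → CFormula k
  | and : CFormula k → CFormula k → CFormula k
  | count : ℕ → Fin k → CFormula k → CFormula k

/-- The free variables of a counting-logic formula. -/
def CFormula.freeVars {k : ℕ} : CFormula k → Finset (Fin k)
  | .eq i j => {i, j}
  | .adj i j => {i, j}
  | .not φ => φ.freeVars
  | .and φ ψ => φ.freeVars ∪ ψ.freeVars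
  | .count _ i φ => φ.freeVars.erase i

/-- Satisfaction of a counting-logic formula in the graph `G` under the assignment `a`. -/
def CSat {V : Type} (G : SimpleGraph V) {k : ℕ} : CFormula k → (Fin k → V) → Prop
  | .eq i j, a => a i = a j
  | .adj i j, a => G.Adj (a i) (a j)
  | .not φ, a => ¬ CSat G φ a
  | .and φ ψ, a => CSat G φ a ∧ CSat G ψ a
  | .count n i φ, a => n ≤ Set.ncard {u : V | CSat G φ (Function.update a i u)}

/-- `G ≡_{C_k} H` : the graphs `G` and `H` satisfy exactly the same sentences of the
`k`-variable fragment of first-order logic with counting. -/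
def CEquiv {V W : Type} (G : SimpleGraph V) (H : SimpleGraph W) (k : ℕ) : Prop :=
  ∀ φ : CFormula k, φ.freeVars = ∅ →
    ((∀ a : Fin k → V, CSat G φ a) ↔ (∀ a : Fin k → W, CSat H φ a))

/-!
Encode a vertex of `G¹` by a pair of vertices of `G`: an original vertex `u` by `(u, u)`, the
subdivision vertex of an edge `uv` by `(u, v)` or `(v, u)`. A `C_k` formula about `G¹` then
translates, variable by variable, into a `C_{2k}` formula about `G`. Equality and adjacency in
`G¹` become quantifier-free conditions on the pairs. A counting quantifier over `G¹` counts
original vertices, i.e. pairs `(u, u)`, and edges, each of which is hit by exactly two ordered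
adjacent pairs. Counting pairs `(u, v)` needs only two variables, because `m ≤ ∑ᵤ F u` is a finite
Boolean combination of the statements "at least `n` vertices `u` have `F u > j`".
-/

open Finset

section Counting

variable {α ι : Type} [Fintype α]

lemma le_sum_iff_le_sum_min (s : Finset ι) (f : ι → ℕ) (m : ℕ) :
    m ≤ ∑ i ∈ s, f i ↔ m ≤ ∑ i ∈ s, min (f i) m := by
  refine ⟨fun hm => ?_, fun hm => hm.trans (sum_le_sum fun i _ => min_le_left _ _)⟩
  by_cases hbig : ∃ i ∈ s, m ≤ f i
  · obtain ⟨i, hi, hmi⟩ := hbig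
    calc m = min (f i) m := (min_eq_right hmi).symm
      _ ≤ _ := single_le_sum (f := fun i => min (f i) m) (fun _ _ => Nat.zero_le _) hi
  · push Not at hbig
    rwa [sum_congr rfl fun i hi => min_eq_left (hbig i hi).le]

lemma sum_card_lt_eq_sum_min (F : α → ℕ) (m : ℕ) :
    ∑ j : Fin m, #{u | (j : ℕ) < F u} = ∑ u, min (F u) m := by
  simp_rw [card_filter]
  rw [sum_comm]
  refine sum_congr rfl fun u _ => ?_
  rw [sum_boole, Fin.card_filter_val_lt, min_comm]
  simp

lemma le_sum_iff_exists_thresholds (F : α → ℕ) (m : ℕ) :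
    m ≤ ∑ u, F u ↔ ∃ n : Fin m → Fin (m + 1),
      m ≤ ∑ j, (n j : ℕ) ∧ ∀ j, (n j : ℕ) ≤ #{u | (j : ℕ) < F u} := by
  rw [le_sum_iff_le_sum_min, ← sum_card_lt_eq_sum_min, le_sum_iff_le_sum_min]
  constructor
  · intro hm
    exact ⟨fun j => ⟨min #{u | (j : ℕ) < F u} m, Nat.lt_succ_of_le (min_le_right _ _)⟩,
      hm, fun j => min_le_left _ _⟩
  · rintro ⟨n, hn, hle⟩
    refine hn.trans (sum_le_sum fun j _ => le_min (hle j) ?_)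
    exact Nat.lt_succ_iff.1 (n j).isLt

lemma ncard_setOf_eq_sum_ite (p : α → Prop) [DecidablePred p] :
    {x | p x}.ncard = ∑ x, if p x then 1 else 0 := by
  rw [Set.ncard_eq_toFinset_card', Set.toFinset_ofPred, card_filter]

lemma sum_ncard_eq_ncard_diag (Q : α → α → Prop) :
    ∑ u, {v | u = v ∧ Q u v}.ncard = {u | Q u u}.ncard := by
  classical
  simp only [ncard_setOf_eq_sum_ite, ite_and, sum_ite_eq, mem_univ, if_true]

lemma le_iff_exists_split {N D A n : ℕ} (h : 2 * N = 2 * D + A) :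
    n ≤ N ↔ ∃ n₁ ≤ n, n₁ ≤ D ∧ 2 * (n - n₁) ≤ A := by
  constructor
  · intro hn
    exact ⟨min n D, by omega, by omega, by omega⟩
  · rintro ⟨n₁, -, h₁, h₂⟩
    omega

end Counting

namespace CFormula

variable {k : ℕ}

def top (x : Fin k) : CFormula k := eq x x

def bot (x : Fin k) : CFormula k := not (top x)

def or (φ ψ : CFormula k) : CFormula k := not (and (not φ) (not ψ))

def imp (φ ψ : CFormula k) : CFormula k := not (and φ (not ψ))

def all (x : Fin k) (φ : CFormula k) : CFormula k := not (count 1 x (not φ))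

/-- `CFormula` has no constants: the variable `x` only serves to write down the empty
disjunction (and the empty conjunction in `bigAnd`). -/
noncomputable def bigOr {ι : Type} (x : Fin k) (s : Finset ι) (f : ι → CFormula k) :
    CFormula k :=
  (s.toList.map f).foldr or (bot x)

noncomputable def bigAnd {ι : Type} (x : Fin k) (s : Finset ι) (f : ι → CFormula k) :
    CFormula k :=
  (s.toList.map f).foldr and (top x)

/-- `m ≤ #{(u, v) | φ}` for the values `u, v` of `x, y`, via `le_sum_iff_exists_thresholds`. -/
noncomputable def countPairs (x y : Fin k) (m : ℕ) (φ : CFormula k) : CFormula k :=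
  bigOr x (univ.filter fun n : Fin m → Fin (m + 1) => m ≤ ∑ j, (n j : ℕ)) fun n =>
    bigAnd x univ fun j => count (n j) x (count ((j : ℕ) + 1) y φ)

def forallClosure (φ : CFormula k) : CFormula k := (List.finRange k).foldr all φ

lemma freeVars_foldr_all (l : List (Fin k)) (φ : CFormula k) :
    (l.foldr all φ).freeVars = φ.freeVars \ l.toFinset := by
  induction l with
  | nil => simp
  | cons x l ih =>
    simp [all, freeVars, ih, sdiff_insert]

@[simp] lemma freeVars_forallClosure (φ : CFormula k) : φ.forallClosure.freeVars = ∅ := by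
  simp [forallClosure, freeVars_foldr_all]

end CFormula

section Semantics

open CFormula

variable {V : Type} (G : SimpleGraph V) {k : ℕ}

@[simp] lemma csat_top (x : Fin k) (a : Fin k → V) : CSat G (top x) a := by
  simp [top, CSat]

@[simp] lemma csat_bot (x : Fin k) (a : Fin k → V) : ¬ CSat G (bot x) a := by
  simp [bot, CSat]

@[simp] lemma csat_or (φ ψ : CFormula k) (a : Fin k → V) :
    CSat G (or φ ψ) a ↔ CSat G φ a ∨ CSat G ψ a := by
  simp only [CFormula.or, CSat]; tauto

@[simp] lemma csat_imp (φ ψ : CFormula k) (a : Fin k → V) :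
    CSat G (imp φ ψ) a ↔ (CSat G φ a → CSat G ψ a) := by
  simp only [imp, CSat]; tauto

@[simp] lemma csat_all [Finite V] (x : Fin k) (φ : CFormula k) (a : Fin k → V) :
    CSat G (all x φ) a ↔ ∀ u, CSat G φ (Function.update a x u) := by
  simp only [all, CSat, Nat.one_le_iff_ne_zero, not_not]
  rw [Set.ncard_eq_zero, Set.eq_empty_iff_forall_notMem]
  simp

lemma csat_bigOr {ι : Type} (x : Fin k) (s : Finset ι) (f : ι → CFormula k) (a : Fin k → V) :
    CSat G (bigOr x s f) a ↔ ∃ i ∈ s, CSat G (f i) a := by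
  suffices ∀ l : List ι, CSat G ((l.map f).foldr or (bot x)) a ↔ ∃ i ∈ l, CSat G (f i) a by
    simpa [bigOr] using this s.toList
  intro l
  induction l <;> simp_all

lemma csat_bigAnd {ι : Type} (x : Fin k) (s : Finset ι) (f : ι → CFormula k) (a : Fin k → V) :
    CSat G (bigAnd x s f) a ↔ ∀ i ∈ s, CSat G (f i) a := by
  suffices ∀ l : List ι, CSat G ((l.map f).foldr and (top x)) a ↔ ∀ i ∈ l, CSat G (f i) a by
    simpa [bigAnd] using this s.toList
  intro l
  induction l <;> simp_all [CSat]

lemma forall_csat_forallClosure_iff [Finite V] (φ : CFormula k) :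
    (∀ a, CSat G φ.forallClosure a) ↔ ∀ a, CSat G φ a := by
  rw [forallClosure]
  induction List.finRange k with
  | nil => rfl
  | cons x l ih =>
    rw [← ih, List.foldr_cons]
    simp only [csat_all]
    exact ⟨fun h a => by simpa using h a (a x), fun h a u => h _⟩

lemma csat_countPairs [Fintype V] (x y : Fin k) (m : ℕ) (φ : CFormula k) (a : Fin k → V) :
    CSat G (countPairs x y m φ) a ↔
      m ≤ ∑ u, {v | CSat G φ (Function.update (Function.update a x u) y v)}.ncard := by
  classical
  rw [le_sum_iff_exists_thresholds]
  simp [countPairs, csat_bigOr, csat_bigAnd, CSat, Set.ncard_eq_toFinset_card']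

end Semantics

attribute [reducible] SubdivVerts SubEdges

section OneSubdivision

variable {V : Type} [LinearOrder V] {G : SimpleGraph V} {u v u' v' : V}

lemma min_max_eq_min_max_iff {a b c d : V} :
    min a b = min c d ∧ max a b = max c d ↔ (a = c ∧ b = d) ∨ (a = d ∧ b = c) := by
  rcases le_total a b with hab | hab <;> rcases le_total c d with hcd | hcd <;>
    simp only [min_eq_left, min_eq_right, max_eq_left, max_eq_right, hab, hcd] <;>
    constructor <;> grind

lemma SimpleGraph.Adj.min_max (h : G.Adj u v) : G.Adj (min u v) (max u v) := by
  rcases le_total u v with huv | hvu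
  · simpa [huv]
  · simpa [hvu] using h.symm

def SubEdges.mk (h : G.Adj u v) : SubEdges G :=
  ⟨(min u v, max u v), min_lt_max.2 h.ne, h.min_max⟩

lemma SubEdges.mk_eq_mk_iff (h : G.Adj u v) (h' : G.Adj u' v') :
    mk h = mk h' ↔ (u = u' ∧ v = v') ∨ (u = v' ∧ v = u') := by
  rw [← min_max_eq_min_max_iff, ← Prod.mk.injEq]
  exact Subtype.ext_iff

lemma SubEdges.mk_comm (h : G.Adj u v) : mk h.symm = mk h :=
  Subtype.ext (by simp [mk, min_comm, max_comm])

lemma SubEdges.mk_val (e : SubEdges G) : mk e.2.2 = e :=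
  Subtype.ext (by simp [mk, e.2.1.le])

open Classical in
variable (G) in
/-- The vertex of `G¹` encoded by a pair of vertices of `G`: `(u, u)` encodes `u`, and `(u, v)`
and `(v, u)` encode the subdivision vertex of the edge `uv`. Other pairs get junk values. -/
noncomputable def pairVert (u v : V) : SubdivVerts G 1 :=
  if h : G.Adj u v then .inr (SubEdges.mk h, 0) else .inl (min u v)

@[simp] lemma pairVert_self (u : V) : pairVert G u u = Sum.inl u := by
  simp [pairVert]

lemma pairVert_of_adj (h : G.Adj u v) : pairVert G u v = Sum.inr (SubEdges.mk h, 0) := by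
  simp [pairVert, h]

lemma pairVert_comm (u v : V) : pairVert G u v = pairVert G v u := by
  by_cases h : G.Adj u v
  · rw [pairVert_of_adj h, pairVert_of_adj h.symm, SubEdges.mk_comm]
  · simp [pairVert, h, mt G.adj_symm h, min_comm]

lemma exists_pairVert_eq (x : SubdivVerts G 1) :
    ∃ u v, (u = v ∨ G.Adj u v) ∧ pairVert G u v = x := by
  rcases x with u | ⟨e, j⟩
  · exact ⟨u, u, Or.inl rfl, pairVert_self u⟩
  · refine ⟨e.1.1, e.1.2, Or.inr e.2.2, ?_⟩
    rw [pairVert_of_adj e.2.2, SubEdges.mk_val, Subsingleton.elim j 0]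

lemma eq_min_or_eq_max_iff {a b c : V} : a = min b c ∨ a = max b c ↔ a = b ∨ a = c := by
  rcases le_total b c with h | h <;> simp [h, or_comm]

lemma pairVert_eq_pairVert_iff (h : u = v ∨ G.Adj u v) (h' : u' = v' ∨ G.Adj u' v') :
    pairVert G u v = pairVert G u' v' ↔ (u = u' ∧ v = v') ∨ (u = v' ∧ v = u') := by
  rcases h with rfl | h <;> rcases h' with rfl | h'
  · simp
  · simp only [pairVert_self, pairVert_of_adj h', reduceCtorEq, false_iff]
    grind [h'.ne]
  · simp only [pairVert_self, pairVert_of_adj h, reduceCtorEq, false_iff]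
    grind [h.ne]
  · simp [pairVert_of_adj h, pairVert_of_adj h', SubEdges.mk_eq_mk_iff]

lemma subdivision_one_adj_pairVert_iff (h : u = v ∨ G.Adj u v) (h' : u' = v' ∨ G.Adj u' v') :
    (subdivision G 1).Adj (pairVert G u v) (pairVert G u' v') ↔
      (u = v ∧ G.Adj u' v' ∧ (u = u' ∨ u = v')) ∨ (u' = v' ∧ G.Adj u v ∧ (u' = u ∨ u' = v)) := by
  rcases h with rfl | h <;> rcases h' with rfl | h'
  · simp [subdivision]
  · simp [subdivision, pairVert_of_adj h', SubEdges.mk, eq_min_or_eq_max_iff, h']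
  · simp [subdivision, pairVert_of_adj h, SubEdges.mk, eq_min_or_eq_max_iff, h]
  · simp [subdivision, pairVert_of_adj h, pairVert_of_adj h', h.ne, h'.ne]

variable [Fintype V]

lemma ncard_setOf_subdivVerts (P : SubdivVerts G 1 → Prop) :
    {x | P x}.ncard =
      {u | P (Sum.inl u)}.ncard + {e : SubEdges G | P (Sum.inr (e, 0))}.ncard := by
  classical
  simp only [ncard_setOf_eq_sum_ite, Fintype.sum_sum_type, Fintype.sum_prod_type,
    Fin.sum_univ_one]

lemma sum_ncard_adj_eq_two_mul (Q : V → V → Prop) (hQ : ∀ u v, Q u v → Q v u) :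
    ∑ u, {v | G.Adj u v ∧ Q u v}.ncard = 2 * {e : SubEdges G | Q e.1.1 e.1.2}.ncard := by
  classical
  have hsplit : ∀ u v, (if G.Adj u v ∧ Q u v then 1 else 0) =
      (if u < v ∧ G.Adj u v ∧ Q u v then 1 else 0) +
        (if v < u ∧ G.Adj v u ∧ Q v u then 1 else 0) := by
    intro u v
    rcases lt_trichotomy u v with huv | rfl | huv
    · simp [huv, huv.not_gt]
    · simp
    · simp [huv, huv.not_gt, G.adj_comm, show Q u v ↔ Q v u from ⟨hQ u v, hQ v u⟩]
  simp only [ncard_setOf_eq_sum_ite]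
  rw [sum_congr rfl fun u _ => sum_congr rfl fun v _ => hsplit u v]
  simp only [sum_add_distrib]
  rw [sum_comm (f := fun u v => if v < u ∧ G.Adj v u ∧ Q v u then 1 else 0), ← two_mul,
    ← Fintype.sum_prod_type' (f := fun u v => if u < v ∧ G.Adj u v ∧ Q u v then 1 else 0)]
  rw [← subtype_univ,
    sum_subtype_eq_sum_filter (f := fun p : V × V => if Q p.1 p.2 then 1 else 0),
    sum_filter]
  simp only [ite_and]

lemma two_mul_ncard_setOf_subdivVerts (P : SubdivVerts G 1 → Prop) :
    2 * {x | P x}.ncard = 2 * ∑ u, {v | u = v ∧ P (pairVert G u v)}.ncard +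
      ∑ u, {v | G.Adj u v ∧ P (pairVert G u v)}.ncard := by
  have hedge : {e : SubEdges G | P (pairVert G e.1.1 e.1.2)} = {e | P (Sum.inr (e, 0))} := by
    ext e; simp [pairVert_of_adj e.2.2, SubEdges.mk_val]
  rw [sum_ncard_eq_ncard_diag, sum_ncard_adj_eq_two_mul _ fun u v => by simp [pairVert_comm u v],
    hedge, ncard_setOf_subdivVerts]
  simp only [pairVert_self, mul_add]

end OneSubdivision

namespace CFormula

variable {k : ℕ}

def lo (i : Fin k) : Fin (2 * k) := finProdFinEquiv (0, i)

def hi (i : Fin k) : Fin (2 * k) := finProdFinEquiv (1, i)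

@[simp] lemma lo_inj {i j : Fin k} : lo i = lo j ↔ i = j := by simp [lo]

@[simp] lemma hi_inj {i j : Fin k} : hi i = hi j ↔ i = j := by simp [hi]

@[simp] lemma lo_ne_hi (i j : Fin k) : lo i ≠ hi j := by simp [lo, hi]

@[simp] lemma hi_ne_lo (i j : Fin k) : hi i ≠ lo j := (lo_ne_hi j i).symm

/-- The variable `i` becomes the pair of variables `(lo i, hi i)`, read through `pairVert`. -/
noncomputable def unsubdivide : CFormula k → CFormula (2 * k)
  | eq i j =>
    or (and (eq (lo i) (lo j)) (eq (hi i) (hi j))) (and (eq (lo i) (hi j)) (eq (hi i) (lo j)))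
  | adj i j =>
    or (and (eq (lo i) (hi i)) (and (adj (lo j) (hi j)) (or (eq (lo i) (lo j)) (eq (lo i) (hi j)))))
      (and (eq (lo j) (hi j)) (and (adj (lo i) (hi i)) (or (eq (lo j) (lo i)) (eq (lo j) (hi i)))))
  | not φ => not (unsubdivide φ)
  | and φ ψ => and (unsubdivide φ) (unsubdivide ψ)
  -- `n ≤ #vertices + #edges` as `n₁ ≤ #vertices` and `2 (n - n₁) ≤ #(ordered adjacent pairs)`
  | count n i φ => bigOr (lo i) (range (n + 1)) fun n₁ =>
    and (countPairs (lo i) (hi i) n₁ (and (eq (lo i) (hi i)) (unsubdivide φ)))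
      (countPairs (lo i) (hi i) (2 * (n - n₁)) (and (adj (lo i) (hi i)) (unsubdivide φ)))

def guardPairs (φ : CFormula (2 * k)) : CFormula (2 * k) :=
  (List.finRange k).foldr (fun i ψ => imp (or (eq (lo i) (hi i)) (adj (lo i) (hi i))) ψ) φ

end CFormula

section Translation

open CFormula

variable {V : Type} (G : SimpleGraph V) {k : ℕ}

def ValidPairs (b : Fin (2 * k) → V) : Prop :=
  ∀ i, b (lo i) = b (hi i) ∨ G.Adj (b (lo i)) (b (hi i))

variable {G} in
lemma ValidPairs.update {b : Fin (2 * k) → V} (hb : ValidPairs G b) (i : Fin k) {u v : V}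
    (huv : u = v ∨ G.Adj u v) :
    ValidPairs G (Function.update (Function.update b (lo i) u) (hi i) v) := by
  intro j
  by_cases hj : j = i
  · subst hj; simpa using huv
  · simpa [Function.update_apply, hj] using hb j

lemma csat_guardPairs (φ : CFormula (2 * k)) (b : Fin (2 * k) → V) :
    CSat G (guardPairs φ) b ↔ (ValidPairs G b → CSat G φ b) := by
  suffices ∀ l : List (Fin k),
      CSat G (l.foldr (fun i ψ => imp (or (eq (lo i) (hi i)) (adj (lo i) (hi i))) ψ) φ) b ↔
        ((∀ i ∈ l, b (lo i) = b (hi i) ∨ G.Adj (b (lo i)) (b (hi i))) → CSat G φ b) by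
    simpa [guardPairs, ValidPairs] using this (List.finRange k)
  intro l
  induction l <;> simp_all [CSat]

variable [LinearOrder V]

noncomputable def decodePairs (b : Fin (2 * k) → V) : Fin k → SubdivVerts G 1 :=
  fun i => pairVert G (b (lo i)) (b (hi i))

variable {G}

lemma decodePairs_update (b : Fin (2 * k) → V) (i : Fin k) (u v : V) :
    Function.update (decodePairs G b) i (pairVert G u v) =
      decodePairs G (Function.update (Function.update b (lo i) u) (hi i) v) := by
  funext j
  by_cases hj : j = i
  · subst hj; simp [decodePairs]
  · simp [decodePairs, hj]

lemma exists_validPairs_decodePairs_eq (a : Fin k → SubdivVerts G 1) :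
    ∃ b, ValidPairs G b ∧ decodePairs G b = a := by
  choose u v huv hpv using fun i => exists_pairVert_eq (a i)
  refine ⟨fun x => ![u, v] (finProdFinEquiv.symm x).1 (finProdFinEquiv.symm x).2, ?_, ?_⟩
  · intro i; simpa [lo, hi] using huv i
  · funext i; simpa [decodePairs, lo, hi] using hpv i

variable [Fintype V]

lemma csat_unsubdivide (φ : CFormula k) {b : Fin (2 * k) → V} (hb : ValidPairs G b) :
    CSat G φ.unsubdivide b ↔ CSat (subdivision G 1) φ (decodePairs G b) := by
  induction φ generalizing b with
  | eq i j =>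
    simp [unsubdivide, CSat, decodePairs, pairVert_eq_pairVert_iff (hb i) (hb j)]
  | adj i j =>
    simp [unsubdivide, CSat, decodePairs, subdivision_one_adj_pairVert_iff (hb i) (hb j)]
  | not φ ih => simp [unsubdivide, CSat, ih hb]
  | and φ ψ ihφ ihψ => simp [unsubdivide, CSat, ihφ hb, ihψ hb]
  | count n i φ ih =>
    set P : SubdivVerts G 1 → Prop :=
      fun x => CSat (subdivision G 1) φ (Function.update (decodePairs G b) i x)
    have hpair : ∀ u v, u = v ∨ G.Adj u v →
        (CSat G φ.unsubdivide (Function.update (Function.update b (lo i) u) (hi i) v) ↔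
          P (pairVert G u v)) := fun u v huv => by
      rw [ih (hb.update i huv), ← decodePairs_update]
    have hvert : ∀ u,
        {v | u = v ∧ CSat G φ.unsubdivide (Function.update (Function.update b (lo i) u) (hi i) v)} =
          {v | u = v ∧ P (pairVert G u v)} := fun u =>
      Set.ext fun v => and_congr_right fun h => hpair u v (Or.inl h)
    have hedge : ∀ u,
        {v | G.Adj u v ∧
          CSat G φ.unsubdivide (Function.update (Function.update b (lo i) u) (hi i) v)} =
          {v | G.Adj u v ∧ P (pairVert G u v)} := fun u =>
      Set.ext fun v => and_congr_right fun h => hpair u v (Or.inr h)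
    simp only [unsubdivide, csat_bigOr, mem_range, Order.lt_add_one_iff, CSat, csat_countPairs,
      ne_eq, lo_ne_hi, not_false_eq_true, Function.update_of_ne, Function.update_self, hvert, hedge]
    exact (le_iff_exists_split (two_mul_ncard_setOf_subdivVerts _)).symm

lemma forall_csat_subdivision_one_iff (φ : CFormula k) :
    (∀ a, CSat (subdivision G 1) φ a) ↔
      ∀ b, CSat G (guardPairs φ.unsubdivide).forallClosure b := by
  simp only [forall_csat_forallClosure_iff, csat_guardPairs]
  constructor
  · intro h b hb
    exact (csat_unsubdivide φ hb).2 (h _)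
  · intro h a
    obtain ⟨b, hb, rfl⟩ := exists_validPairs_decodePairs_eq a
    exact (csat_unsubdivide φ hb).1 (h b hb)

end Translation

theorem cEquiv_one_subdivision_general {V W : Type} [Fintype V] [LinearOrder V]
    [Fintype W] [LinearOrder W]
    (G : SimpleGraph V) (H : SimpleGraph W) (k : ℕ)
    (h : CEquiv G H (2 * k)) :
    CEquiv (subdivision G 1) (subdivision H 1) k := by
  intro φ _
  rw [forall_csat_subdivision_one_iff, forall_csat_subdivision_one_iff]
  exact h _ (CFormula.freeVars_forallClosure _)

/-- If `G ≡_{C_{2k}} H`, then the 1-subdivisions satisfy `G¹ ≡_{C_k} H¹`. -/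
theorem cEquiv_one_subdivision {V W : Type} [Fintype V] [LinearOrder V]
    [Fintype W] [LinearOrder W]
    (G : SimpleGraph V) (H : SimpleGraph W) (k : ℕ) (hk : 1 ≤ k)
    (h : CEquiv G H (2 * k)) :
    CEquiv (subdivision G 1) (subdivision H 1) k :=
  cEquiv_one_subdivision_general G H k h
end
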